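/- arXiv:2004.06710 — 2 statements merged into one kernel-verified Lean document; each statement's English description precedes it below -/
import Mathlib

section
/- Suppose that G is an infinitely edge-connected graph, that u, v are two distinct vertices of G, and that C is a connected component of G − u − v. If the quotient graph C̃ has a finitely separating spanning tree that contains a subdivision of the infinite binary tree, then the induced subgraph G[C + u + v] contains T_{ℵ0} * t as a minor. -/
open SimpleGraph

universe u v

/-! ### Basic connectivity notions -/

/-- The edge set `F` separates `a` from `b` in `G`: every `a`–`b` walk uses an edge of `F`. -/
def EdgeSeparates {V : Type u} (G : SimpleGraph V) (F : Set (Sym2 V)) (a b : V) : Prop :=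
  ∀ p : G.Walk a b, ∃ e ∈ p.edges, e ∈ F

/-- `a` and `b` are finitely separable in `G`: some finite edge set separates them. -/
def FinSep {V : Type u} (G : SimpleGraph V) (a b : V) : Prop :=
  ∃ F : Set (Sym2 V), F.Finite ∧ EdgeSeparates G F a b

/-- `G` is infinitely edge-connected: it has at least two vertices and no finite set of
edges separates any two distinct vertices. -/
def InfEdgeConnected {V : Type u} (G : SimpleGraph V) : Prop :=
  Nontrivial V ∧ ∀ a b : V, a ≠ b → ¬ FinSep G a b

/-- The vertex set `S` separates `a` from `b`: `a, b ∉ S` and every `a`–`b` walk meets `S`. -/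
def VSeparates {V : Type u} (G : SimpleGraph V) (S : Set V) (a b : V) : Prop :=
  a ∉ S ∧ b ∉ S ∧ ∀ p : G.Walk a b, ∃ z ∈ p.support, z ∈ S

/-! ### Minors -/

/-- `br` is a minor model of `H` in `G`: the branch sets `br w` are nonempty, pairwise
disjoint, connected in `G`, and edges of `H` are witnessed by `G`-edges between branch sets. -/
def IsMinorModel {V : Type u} {W : Type v} (G : SimpleGraph V) (H : SimpleGraph W)
    (br : W → Set V) : Prop :=
  (∀ w, (br w).Nonempty) ∧ (∀ w, (G.induce (br w)).Connected) ∧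
    (∀ w w' : W, w ≠ w' → Disjoint (br w) (br w')) ∧
    (∀ w w' : W, H.Adj w w' → ∃ a ∈ br w, ∃ b ∈ br w', G.Adj a b)

/-- `H` is a minor of `G`. -/
def HasMinor {V : Type u} {W : Type v} (G : SimpleGraph V) (H : SimpleGraph W) : Prop :=
  ∃ br : W → Set V, IsMinorModel G H br

/-- `G` and `H` are minor-equivalent: each is a minor of the other. -/
def MinorEquiv {V : Type u} {W : Type v} (G : SimpleGraph V) (H : SimpleGraph W) : Prop :=
  HasMinor G H ∧ HasMinor H G

/-- `H` is a topological minor of `G`: there are branch vertices (given by the injection `f`)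
and internally disjoint paths in `G` joining them, one for each edge of `H`, together forming
a subdivision of `H` inside `G`. -/
def IsTopMinor {V : Type u} {W : Type v} (G : SimpleGraph V) (H : SimpleGraph W) : Prop :=
  ∃ f : W → V, Function.Injective f ∧
    ∃ p : ∀ ⦃x y : W⦄, H.Adj x y → G.Walk (f x) (f y),
      (∀ ⦃x y : W⦄ (h : H.Adj x y), (p h).IsPath) ∧
      (∀ ⦃x y : W⦄ (h : H.Adj x y), ∀ w : W, f w ∈ (p h).support → w = x ∨ w = y) ∧
      (∀ ⦃x y x' y' : W⦄ (h : H.Adj x y) (h' : H.Adj x' y'), s(x, y) ≠ s(x', y') →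
        ∀ z : V, z ∈ (p h).support → z ∈ (p h').support →
          (z = f x ∨ z = f y) ∧ (z = f x' ∨ z = f y'))

/-! ### The Farey graph, the halved Farey graph, `T_ℵ₀ * t` and the binary tree -/

/-- The Farey graph, on vertex set `ℚ ∪ {∞}` (with `none` playing the role of `∞ = 1/0`):
two rationals `a/b` and `c/d` in lowest terms are adjacent iff `ad - cb = ±1`. -/
def fareyGraph : SimpleGraph (Option ℚ) where
  Adj x y :=
    match x, y with
    | some q, some r => (q.num * (r.den : ℤ) - r.num * (q.den : ℤ)).natAbs = 1
    | some q, none => q.den = 1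
    | none, some r => r.den = 1
    | none, none => False
  symm := by
    constructor
    rintro (_ | q) (_ | r) h
    · exact h
    · exact h
    · exact h
    · simp only at h ⊢
      rw [← neg_sub, Int.natAbs_neg] at h
      exact h
  loopless := by
    constructor
    rintro (_ | q) h
    · exact h
    · simp at h

/-- The `ℵ₀`-regular tree, realised on finite sequences of naturals, a vertex being
adjacent precisely to its parent and to its infinitely many children. -/
def TAleph0 : SimpleGraph (List ℕ) where
  Adj x y := (∃ n, x = n :: y) ∨ (∃ n, y = n :: x)
  symm := by
    constructor
    rintro x y (h | h)
    · exact Or.inr h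
    · exact Or.inl h
  loopless := by
    constructor
    rintro x (⟨n, h⟩ | ⟨n, h⟩) <;> exact List.cons_ne_self n x h.symm

/-- The graph `T_ℵ₀ * t`: the `ℵ₀`-regular tree together with one additional vertex
(`none`) joined to all of its vertices. -/
def TAleph0Star : SimpleGraph (Option (List ℕ)) where
  Adj x y :=
    match x, y with
    | none, none => False
    | none, some _ => True
    | some _, none => True
    | some a, some b => TAleph0.Adj a b
  symm := by
    constructor
    rintro (_ | a) (_ | b) h
    · exact h
    · trivial
    · trivial
    · exact TAleph0.adj_symm h
  loopless := by
    constructor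
    rintro (_ | a) h
    · exact h
    · exact TAleph0.loopless.irrefl a h

/-- The infinite binary tree, realised on finite sequences of booleans, a vertex being
adjacent precisely to its parent and to its two children. -/
def binaryTree : SimpleGraph (List Bool) where
  Adj x y := (∃ b, x = b :: y) ∨ (∃ b, y = b :: x)
  symm := by
    constructor
    rintro x y (h | h)
    · exact Or.inr h
    · exact Or.inl h
  loopless := by
    constructor
    rintro x (⟨b, h⟩ | ⟨b, h⟩) <;> exact List.cons_ne_self b x h.symm

/-- The two original endvertices of the blue edge to which the vertex recursively created
for a binary string was joined when it was created.  The two initial vertices of `F̌₀` are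
`Sum.inl true` and `Sum.inl false`; the vertex created for the string `s` is `Sum.inr s`,
its two children being `false :: s` and `true :: s`. -/
def hfEnds : List Bool → (Bool ⊕ List Bool) × (Bool ⊕ List Bool)
  | [] => (Sum.inl true, Sum.inl false)
  | (false :: s) => (Sum.inr s, (hfEnds s).1)
  | (true :: s) => (Sum.inr s, (hfEnds s).2)

/-- The halved Farey graph `F̌ = ⋃ₙ F̌ₙ`. -/
def halvedFareyGraph : SimpleGraph (Bool ⊕ List Bool) where
  Adj x y := x ≠ y ∧
    ((x = Sum.inl true ∧ y = Sum.inl false) ∨ (y = Sum.inl true ∧ x = Sum.inl false) ∨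
      (∃ s, x = Sum.inr s ∧ (y = (hfEnds s).1 ∨ y = (hfEnds s).2)) ∨
      (∃ s, y = Sum.inr s ∧ (x = (hfEnds s).1 ∨ x = (hfEnds s).2)))
  symm := by
    constructor
    rintro x y ⟨hne, h⟩
    refine ⟨hne.symm, ?_⟩
    rcases h with h | h | h | h
    · exact Or.inr (Or.inl h)
    · exact Or.inl h
    · exact Or.inr (Or.inr (Or.inr h))
    · exact Or.inr (Or.inr (Or.inl h))
  loopless := by constructor; rintro x ⟨hne, -⟩; exact hne rfl

/-! ### Spanning trees, bonds and separations -/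

/-- The fundamental cut of the edge `ab` of a spanning tree `T` of `G`: the set of edges
of `G` joining the two components of `T - ab`. -/
def FundCut {V : Type u} (G T : SimpleGraph V) (a b : V) : Set (Sym2 V) :=
  {e | e ∈ G.edgeSet ∧ ∃ x y : V, e = s(x, y) ∧
    (T.deleteEdges {s(a, b)}).Reachable a x ∧ (T.deleteEdges {s(a, b)}).Reachable b y}

/-- `T` is a finitely separating spanning tree of `G`: a spanning tree all of whose
fundamental cuts are finite. -/
def IsFinSepSpanningTree {V : Type u} (G T : SimpleGraph V) : Prop :=
  T ≤ G ∧ T.IsTree ∧ ∀ a b : V, T.Adj a b → (FundCut G T a b).Finite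

/-- The set of edges of `G` between the vertex sets `A` and `B`. -/
def cutEdgesBetween {V : Type u} (G : SimpleGraph V) (A B : Set V) : Set (Sym2 V) :=
  {e | ∃ a ∈ A, ∃ b ∈ B, G.Adj a b ∧ e = s(a, b)}

/-- `(A, B)` is an orientation of an element of `B_ℵ₀(G)`: a bipartition of `V(G)` whose
cut is a finite bond, i.e. is nonempty and finite with both sides connected. -/
def IsFinBondOrientation {V : Type u} (G : SimpleGraph V) (A B : Set V) : Prop :=
  A ∪ B = Set.univ ∧ Disjoint A B ∧
    (cutEdgesBetween G A B).Nonempty ∧ (cutEdgesBetween G A B).Finite ∧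
    (G.induce A).Connected ∧ (G.induce B).Connected

/-! ### The quotient graph `G̃` by finite inseparability -/

/-- The class of all vertices not finitely separable from `x`. -/
def ncls {V : Type u} (G : SimpleGraph V) (x : V) : Set V := {y | ¬ FinSep G x y}

/-- The vertex classes of `G̃`. -/
def ClassOf {V : Type u} (G : SimpleGraph V) : Type u := {X : Set V // ∃ x, X = ncls G x}

/-- The quotient graph `G̃` on the classes of pairwise not finitely separable vertices;
two distinct classes are adjacent iff `G` has an edge between them. -/
def tildeGraph {V : Type u} (G : SimpleGraph V) : SimpleGraph (ClassOf G) where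
  Adj X Y := X ≠ Y ∧ ∃ a ∈ X.1, ∃ b ∈ Y.1, G.Adj a b
  symm := by
    constructor
    rintro X Y ⟨hne, a, ha, b, hb, hab⟩
    exact ⟨hne.symm, b, hb, a, ha, hab.symm⟩
  loopless := by constructor; rintro X ⟨hne, -⟩; exact hne rfl

/-- `C` is (the vertex set of) a connected component of `G - u - v`. -/
def IsCompOf {V : Type u} (G : SimpleGraph V) (u v : V) (C : Set V) : Prop :=
  u ∉ C ∧ v ∉ C ∧ (G.induce C).Connected ∧
    ∀ x, x ∉ C → x ≠ u → x ≠ v → ∀ c ∈ C, ¬ G.Adj c x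

/-! ### Arrows, footballs, muscles and plows -/

/-- `A` is an arrow from `u` to `v`: it arises from `u` and `v` by disjointly adding an
infinitely edge-connected payload `H` (here: everything except `u` and `v`), adding a
single `u`–`H` edge `u h`, and adding infinitely many `v`–`(H - h)` edges. -/
def IsArrow {W : Type u} (A : SimpleGraph W) (u v : W) : Prop :=
  u ≠ v ∧
    ∃ h : W, h ≠ u ∧ h ≠ v ∧
      (∀ w, A.Adj u w ↔ w = h) ∧
      {w | A.Adj v w}.Infinite ∧
      (∀ w, A.Adj v w → w ≠ u ∧ w ≠ h) ∧
      InfEdgeConnected (A.induce {w | w ≠ u ∧ w ≠ v})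

/-- `B` is an arrow barrage from `u` to `v`: a union of countably infinitely many arrows
from `u` to `v` which pairwise meet precisely in `u` and `v`. -/
def IsArrowBarrage {W : Type u} (B : SimpleGraph W) (u v : W) : Prop :=
  u ≠ v ∧ ¬ B.Adj u v ∧
    ∃ P : ℕ → Set W,
      (∀ n, u ∉ P n ∧ v ∉ P n) ∧
      (∀ n m, n ≠ m → Disjoint (P n) (P m)) ∧
      (∀ w : W, w ≠ u → w ≠ v → ∃ n, w ∈ P n) ∧
      (∀ n m, n ≠ m → ∀ a ∈ P n, ∀ b ∈ P m, ¬ B.Adj a b) ∧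
      (∀ n, IsArrow (B.induce (P n ∪ {u, v}))
        ⟨u, by simp⟩ ⟨v, by simp⟩)

/-- `G` contains an arrow barrage minor from `x` to `y`: the branch set of the nock
contains `x` and the branch set of the head contains `y`. -/
def HasArrowBarrageMinorFromTo {V : Type u} (G : SimpleGraph V) (x y : V) : Prop :=
  ∃ (W : Type u) (B : SimpleGraph W) (n h : W) (br : W → Set V),
    IsArrowBarrage B n h ∧ IsMinorModel G B br ∧ x ∈ br n ∧ y ∈ br h

/-- `F` is a football with endvertices `u` and `v`: `F` is infinitely edge-connected and
so is `F - u - v`. -/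
def IsFootball {W : Type u} (F : SimpleGraph W) (u v : W) : Prop :=
  u ≠ v ∧ InfEdgeConnected F ∧ InfEdgeConnected (F.induce {w | w ≠ u ∧ w ≠ v})

/-- `G` contains a football minor connecting `x` and `y`. -/
def HasFootballMinorConnecting {V : Type u} (G : SimpleGraph V) (x y : V) : Prop :=
  ∃ (W : Type u) (F : SimpleGraph W) (u v : W) (br : W → Set V),
    IsFootball F u v ∧ IsMinorModel G F br ∧
      ((x ∈ br u ∧ y ∈ br v) ∨ (x ∈ br v ∧ y ∈ br u))

/-- `M` is a muscle with endvertices `u` and `v`: it arises from `u` and `v` by disjointly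
adding an infinitely edge-connected graph `H` (everything except `u` and `v`) and adding
one `u`–`H` edge `u x` and one `v`–`H` edge `v y` with `x ≠ y`. -/
def IsMuscle {W : Type u} (M : SimpleGraph W) (u v : W) : Prop :=
  u ≠ v ∧
    ∃ x y : W, x ≠ u ∧ x ≠ v ∧ y ≠ u ∧ y ≠ v ∧ x ≠ y ∧
      (∀ w, M.Adj u w ↔ w = x) ∧ (∀ w, M.Adj v w ↔ w = y) ∧
      InfEdgeConnected (M.induce {w | w ≠ u ∧ w ≠ v})

/-- `B` is a muscle barrage with endvertices `u` and `v`. -/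
def IsMuscleBarrage {W : Type u} (B : SimpleGraph W) (u v : W) : Prop :=
  u ≠ v ∧ ¬ B.Adj u v ∧
    ∃ P : ℕ → Set W,
      (∀ n, u ∉ P n ∧ v ∉ P n) ∧
      (∀ n m, n ≠ m → Disjoint (P n) (P m)) ∧
      (∀ w : W, w ≠ u → w ≠ v → ∃ n, w ∈ P n) ∧
      (∀ n m, n ≠ m → ∀ a ∈ P n, ∀ b ∈ P m, ¬ B.Adj a b) ∧
      (∀ n, IsMuscle (B.induce (P n ∪ {u, v}))
        ⟨u, by simp⟩ ⟨v, by simp⟩)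

/-- `G` contains a muscle barrage minor connecting `x` and `y`. -/
def HasMuscleBarrageMinorConnecting {V : Type u} (G : SimpleGraph V) (x y : V) : Prop :=
  ∃ (W : Type u) (B : SimpleGraph W) (u v : W) (br : W → Set V),
    IsMuscleBarrage B u v ∧ IsMinorModel G B br ∧
      ((x ∈ br u ∧ y ∈ br v) ∨ (x ∈ br v ∧ y ∈ br u))

/-- `P` is a plow with endvertices `u`, `v` and head `h`: the union of two half-plows
(infinitely edge-connected graphs containing the edges `u h` resp. `h v`) meeting
precisely in `h`. -/
def IsPlow {W : Type u} (P : SimpleGraph W) (u v h : W) : Prop :=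
  u ≠ v ∧ u ≠ h ∧ v ≠ h ∧
    ∃ S T : Set W, S ∪ T = Set.univ ∧ S ∩ T = {h} ∧ u ∈ S ∧ v ∈ T ∧
      (∀ a b : W, P.Adj a b → (a ∈ S ∧ b ∈ S) ∨ (a ∈ T ∧ b ∈ T)) ∧
      InfEdgeConnected (P.induce S) ∧ InfEdgeConnected (P.induce T) ∧
      P.Adj u h ∧ P.Adj h v

/-- `G` contains a plow minor connecting `x` and `y`. -/
def HasPlowMinorConnecting {V : Type u} (G : SimpleGraph V) (x y : V) : Prop :=
  ∃ (W : Type u) (P : SimpleGraph W) (u v h : W) (br : W → Set V),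
    IsPlow P u v h ∧ IsMinorModel G P br ∧
      ((x ∈ br u ∧ y ∈ br v) ∨ (x ∈ br v ∧ y ∈ br u))

/-! ### Recursive pruning -/

/-- One pruning step: remove from `S` all vertices whose up-closure within `S`
(w.r.t. the tree order `r`) is a chain. -/
def pruneStep {V : Type u} (r : V → V → Prop) (S : Set V) : Set V :=
  {t | t ∈ S ∧ ¬ IsChain r {s | s ∈ S ∧ r t s}}

/-- The set of vertices still unlabelled at stage `α` of the recursive pruning. -/
noncomputable def unlabelledAt {V : Type u} (r : V → V → Prop) : Ordinal.{u} → Set V :=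
  WellFounded.fix Ordinal.lt_wf
    (fun α ih => {t | ∀ β, ∀ hβ : β < α, t ∈ pruneStep r (ih β hβ)})

/-- The tree order `r` is recursively prunable: every vertex eventually gets labelled. -/
def RecursivelyPrunable {V : Type u} (r : V → V → Prop) : Prop :=
  ∃ α : Ordinal.{u}, unlabelledAt r α = ∅

/-- The tree order of the tree `T` rooted in `root`: `x ≤ y` iff `x` lies on the
(unique) `root`–`y` path of `T`. -/
def treeLE {V : Type u} (T : SimpleGraph V) (root : V) (x y : V) : Prop :=
  ∀ p : T.Walk root y, p.IsPath → x ∈ p.support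

/-! ### Contracting a vertex set -/

/-- The graph `G[W]/X` obtained from the subgraph of `G` induced on `W` by contracting
the vertex set `X` to a single new vertex (`none`); the contracted vertex is adjacent to
precisely those vertices of `W \ X` that send an edge to `X` in `G[W]`. -/
def contractIn {V : Type u} (G : SimpleGraph V) (W X : Set V) :
    SimpleGraph (Option ↥(W \ X)) where
  Adj a b :=
    match a, b with
    | some a, some b => G.Adj a.1 b.1
    | some a, none => ∃ x ∈ W ∩ X, G.Adj a.1 x
    | none, some b => ∃ x ∈ W ∩ X, G.Adj x b.1
    | none, none => False
  symm := by
    constructor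
    rintro (_ | a) (_ | b) h
    · exact h
    · obtain ⟨x, hx, hadj⟩ := h
      exact ⟨x, hx, hadj.symm⟩
    · obtain ⟨x, hx, hadj⟩ := h
      exact ⟨x, hx, hadj.symm⟩
    · exact h.symm
  loopless := by
    constructor
    rintro (_ | a) h
    · exact h
    · exact G.loopless.irrefl _ h

/-! ### Abstract graphs with vertex sets (as subgraphs of the complete ambient graph) -/

/-- A minor model of the abstract graph `H` in the abstract graph `G` (both given as
subgraphs of the complete graph on the ambient vertex type `U`). -/
def AbsMinorModel {U : Type u} (G H : (⊤ : SimpleGraph U).Subgraph) (br : U → Set U) : Prop :=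
  (∀ h ∈ H.verts, br h ⊆ G.verts) ∧
    (∀ h ∈ H.verts, (G.induce (br h)).Connected) ∧
    (∀ h ∈ H.verts, ∀ h' ∈ H.verts, h ≠ h' → Disjoint (br h) (br h')) ∧
    (∀ h h' : U, H.Adj h h' → ∃ a ∈ br h, ∃ b ∈ br h', G.Adj a b)

/-- A minor-map `φ = (D, f) : G ≽ H`: `D ⊆ V(G)`, `f` maps `D` onto `V(H)`, and the
fibres of `f` over the vertices of `H` form the branch sets of a minor model of `H` in `G`. -/
def AbsMinorMap {U : Type u} (G H : (⊤ : SimpleGraph U).Subgraph) (D : Set U) (f : U → U) :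
    Prop :=
  D ⊆ G.verts ∧ (∀ x ∈ D, f x ∈ H.verts) ∧ (∀ h ∈ H.verts, ∃ x ∈ D, f x = h) ∧
    AbsMinorModel G H (fun h => {x | x ∈ D ∧ f x = h})


/-! ### Auxiliary lemmas: finite separability and classes -/

section FinSepLemmas

variable {W : Type u} {Γ : SimpleGraph W}

theorem finSep_symm {a b : W} (h : FinSep Γ a b) : FinSep Γ b a := by
  obtain ⟨F, hF, hsep⟩ := h
  refine ⟨F, hF, fun p => ?_⟩
  obtain ⟨e, he, heF⟩ := hsep p.reverse
  rw [SimpleGraph.Walk.edges_reverse, List.mem_reverse] at he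
  exact ⟨e, he, heF⟩

theorem not_finSep_self (a : W) : ¬ FinSep Γ a a := by
  rintro ⟨F, hF, hsep⟩
  obtain ⟨e, he, -⟩ := hsep SimpleGraph.Walk.nil
  simp at he

theorem exists_walk_avoiding {a b : W} (h : ¬ FinSep Γ a b)
    {F : Set (Sym2 W)} (hF : F.Finite) : ∃ p : Γ.Walk a b, ∀ e ∈ p.edges, e ∉ F := by
  by_contra hcon
  push_neg at hcon
  exact h ⟨F, hF, fun p => hcon p⟩

theorem not_finSep_trans {a x y : W} (hx : ¬ FinSep Γ a x)
    (hy : ¬ FinSep Γ a y) : ¬ FinSep Γ x y := by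
  rintro ⟨F, hF, hsep⟩
  obtain ⟨p, hp⟩ := exists_walk_avoiding hx hF
  obtain ⟨q, hq⟩ := exists_walk_avoiding hy hF
  obtain ⟨e, he, heF⟩ := hsep (p.reverse.append q)
  rw [SimpleGraph.Walk.edges_append, List.mem_append] at he
  rcases he with h | h
  · rw [SimpleGraph.Walk.edges_reverse, List.mem_reverse] at h
    exact hp e h heF
  · exact hq e h heF

theorem not_finSep_symm {a b : W} (h : ¬ FinSep Γ a b) : ¬ FinSep Γ b a :=
  fun hf => h (finSep_symm hf)

theorem mem_ncls_self (a : W) : a ∈ ncls Γ a := not_finSep_self a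

theorem ncls_eq_of_mem {a z : W} (h : z ∈ ncls Γ a) : ncls Γ a = ncls Γ z := by
  ext w
  constructor
  · intro hw
    exact not_finSep_trans h hw
  · intro hw
    exact not_finSep_trans (not_finSep_symm h) hw

theorem class_nonempty (X : ClassOf Γ) : X.1.Nonempty := by
  obtain ⟨x, hx⟩ := X.2
  exact ⟨x, hx ▸ mem_ncls_self x⟩

theorem eq_cls_of_mem {X : ClassOf Γ} {z : W} (h : z ∈ X.1) : X.1 = ncls Γ z := by
  obtain ⟨x, hx⟩ := X.2
  rw [hx] at h ⊢
  exact ncls_eq_of_mem h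

theorem not_finSep_of_mem {X : ClassOf Γ} {x y : W} (hx : x ∈ X.1) (hy : y ∈ X.1) :
    ¬ FinSep Γ x y := by
  rw [eq_cls_of_mem hx] at hy
  exact hy

theorem classes_eq_of_mem_inter {X Y : ClassOf Γ} {z : W} (hx : z ∈ X.1) (hy : z ∈ Y.1) :
    X = Y :=
  Subtype.ext ((eq_cls_of_mem hx).trans (eq_cls_of_mem hy).symm)

/-- The class of a vertex. -/
def cls (Γ : SimpleGraph W) (w : W) : ClassOf Γ := ⟨ncls Γ w, ⟨w, rfl⟩⟩

theorem mem_cls (w : W) : w ∈ (cls Γ w).1 := mem_ncls_self w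

theorem cls_eq_of_mem {X : ClassOf Γ} {z : W} (h : z ∈ X.1) : X = cls Γ z :=
  classes_eq_of_mem_inter h (mem_cls z)

theorem edges_between_finite {X Y : ClassOf Γ} (hne : X ≠ Y) :
    {e : Sym2 W | ∃ a ∈ X.1, ∃ b ∈ Y.1, Γ.Adj a b ∧ e = s(a, b)}.Finite := by
  obtain ⟨x, hx⟩ := class_nonempty X
  obtain ⟨y, hy⟩ := class_nonempty Y
  have hsep : FinSep Γ x y := by
    by_contra h
    have hyX : y ∈ X.1 := by rw [eq_cls_of_mem hx]; exact h
    exact hne (classes_eq_of_mem_inter hyX hy)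
  obtain ⟨F, hF, hsepF⟩ := hsep
  refine hF.subset ?_
  rintro e ⟨a, ha, b, hb, hadj, rfl⟩
  by_contra heF
  obtain ⟨p1, hp1⟩ := exists_walk_avoiding (not_finSep_of_mem hx ha) hF
  obtain ⟨p2, hp2⟩ := exists_walk_avoiding (not_finSep_of_mem hb hy) hF
  obtain ⟨e', he', he'F⟩ := hsepF (p1.append (SimpleGraph.Walk.cons hadj p2))
  rw [SimpleGraph.Walk.edges_append, List.mem_append] at he'
  rcases he' with h | h
  · exact hp1 e' h he'F
  · rw [SimpleGraph.Walk.edges_cons, List.mem_cons] at h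
    rcases h with rfl | h
    · exact heF he'F
    · exact hp2 e' h he'F

end FinSepLemmas

/-! ### Auxiliary lemmas: walks, boundaries, trees -/

section WalkLemmas

variable {W : Type u}

/-- The set of edges of `Γ` leaving the vertex set `B`. -/
def edgeBoundary (Γ : SimpleGraph W) (B : Set W) : Set (Sym2 W) :=
  {e | ∃ a ∈ B, ∃ b ∉ B, Γ.Adj a b ∧ e = s(a, b)}

theorem walk_stay {Γ : SimpleGraph W} {B : Set W} :
    ∀ {x y : W} (q : Γ.Walk x y), x ∈ B →
    (∀ e ∈ q.edges, e ∉ edgeBoundary Γ B) → ∀ z ∈ q.support, z ∈ B := by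
  intro x y q
  induction q with
  | nil =>
    intro hx _ z hz
    rw [SimpleGraph.Walk.support_nil, List.mem_singleton] at hz
    exact hz ▸ hx
  | @cons a c y h q ih =>
    intro hx havoid z hz
    have hc : c ∈ B := by
      by_contra hB
      exact havoid _ (by simp) ⟨a, hx, c, hB, h, rfl⟩
    rw [SimpleGraph.Walk.support_cons, List.mem_cons] at hz
    rcases hz with rfl | hz
    · exact hx
    · exact ih hc (fun e he => havoid e (by simp [he])) z hz

theorem exists_boundary_edge {Γ : SimpleGraph W} {B : Set W} :
    ∀ {x y : W} (p : Γ.Walk x y), x ∈ B → y ∉ B →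
      ∃ a b, a ∈ B ∧ b ∉ B ∧ Γ.Adj a b ∧ s(a, b) ∈ p.edges := by
  intro x y p
  induction p with
  | nil => intro hx hy; exact absurd hx hy
  | @cons a c y h q ih =>
    intro hx hy
    by_cases hc : c ∈ B
    · obtain ⟨a', b', h1, h2, h3, h4⟩ := ih hc hy
      exact ⟨a', b', h1, h2, h3, by simp [h4]⟩
    · exact ⟨a, c, hx, hc, h, by simp⟩

theorem induce_reachable {Γ : SimpleGraph W} {A : Set W} :
    ∀ {x y : W} (q : Γ.Walk x y), (∀ z ∈ q.support, z ∈ A) →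
    ∀ (hx : x ∈ A) (hy : y ∈ A), (Γ.induce A).Reachable ⟨x, hx⟩ ⟨y, hy⟩ := by
  intro x y q
  induction q with
  | nil => intro _ hx hy; exact SimpleGraph.Reachable.refl _
  | @cons a c y h q ih =>
    intro hsup hx hy
    have hc : c ∈ A := hsup _ (by simp)
    have hadj : (Γ.induce A).Adj ⟨a, hx⟩ ⟨c, hc⟩ := h
    exact hadj.reachable.trans (ih (fun z hz => hsup z (by simp [hz])) hc hy)

end WalkLemmas

section TreeLemmas

variable {Λ : Type u} {T : SimpleGraph Λ}

theorem reach_del_or_aux {e : Sym2 Λ} {a b : Λ} (he : e = s(a, b)) :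
    ∀ {x y : Λ} (_ : T.Walk x y),
      (T.deleteEdges {e}).Reachable x y ∨ (T.deleteEdges {e}).Reachable a y ∨
        (T.deleteEdges {e}).Reachable b y := by
  intro x y p
  induction p with
  | nil => exact Or.inl (SimpleGraph.Reachable.refl _)
  | @cons x c y h q ih =>
    by_cases hc : s(x, c) = e
    · rw [he, Sym2.eq_iff] at hc
      rcases hc with ⟨rfl, rfl⟩ | ⟨rfl, rfl⟩
      · rcases ih with h1 | h1 | h1
        · exact Or.inr (Or.inr h1)
        · exact Or.inr (Or.inl h1)
        · exact Or.inr (Or.inr h1)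
      · rcases ih with h1 | h1 | h1
        · exact Or.inr (Or.inl h1)
        · exact Or.inr (Or.inl h1)
        · exact Or.inr (Or.inr h1)
    · have hadj : (T.deleteEdges {e}).Adj x c := by
        rw [SimpleGraph.deleteEdges_adj]
        exact ⟨h, by simpa using hc⟩
      rcases ih with h1 | h1 | h1
      · exact Or.inl (hadj.reachable.trans h1)
      · exact Or.inr (Or.inl h1)
      · exact Or.inr (Or.inr h1)

theorem reach_del_or (hconn : T.Connected) (a b Y : Λ) :
    (T.deleteEdges {s(a, b)}).Reachable a Y ∨ (T.deleteEdges {s(a, b)}).Reachable b Y := by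
  obtain ⟨p⟩ := hconn.preconnected a Y
  rcases reach_del_or_aux rfl p with h | h | h
  · exact Or.inl h
  · exact Or.inl h
  · exact Or.inr h

theorem not_reach_del_of_adj (hT : T.IsAcyclic) {a b : Λ} (hab : T.Adj a b) :
    ¬ (T.deleteEdges {s(a, b)}).Reachable a b := by
  classical
  rintro ⟨p⟩
  have hp : ∀ e ∈ p.edges, e ∈ T.edgeSet := fun e he => by
    have h1 := p.edges_subset_edgeSet he
    rw [SimpleGraph.edgeSet_deleteEdges] at h1
    exact h1.1
  have hnot : s(a, b) ∉ p.edges := fun hmem => by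
    have h1 := p.edges_subset_edgeSet hmem
    rw [SimpleGraph.edgeSet_deleteEdges] at h1
    exact h1.2 rfl
  set q := (p.transfer T hp).bypass with hq
  have hqpath : q.IsPath := SimpleGraph.Walk.bypass_isPath _
  have hqe : s(a, b) ∉ q.edges := fun hmem => by
    have h1 := SimpleGraph.Walk.edges_bypass_subset _ hmem
    rw [SimpleGraph.Walk.edges_transfer] at h1
    exact hnot h1
  have h2 : (SimpleGraph.Walk.cons hab SimpleGraph.Walk.nil).IsPath := by
    rw [SimpleGraph.Walk.cons_isPath_iff]
    exact ⟨SimpleGraph.Walk.IsPath.nil, by simp [hab.ne]⟩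
  have := SimpleGraph.isAcyclic_iff_path_unique.1 hT ⟨q, hqpath⟩ ⟨_, h2⟩
  apply hqe
  have hq2 : q = SimpleGraph.Walk.cons hab SimpleGraph.Walk.nil := by
    exact congrArg Subtype.val this
  rw [hq2]
  simp

theorem walk_cross {e : Sym2 Λ} {c r Y : Λ}
    (hr : ¬ (T.deleteEdges {e}).Reachable c r)
    (hY : (T.deleteEdges {e}).Reachable c Y) (p : T.Walk r Y) : e ∈ p.edges := by
  by_contra hmem
  have hp : ∀ e' ∈ p.edges, e' ∈ (T.deleteEdges {e}).edgeSet := by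
    intro e' he'
    rw [SimpleGraph.edgeSet_deleteEdges]
    refine ⟨p.edges_subset_edgeSet he', ?_⟩
    intro hmem2
    rw [Set.mem_singleton_iff] at hmem2
    exact hmem (hmem2 ▸ he')
  exact hr (hY.trans (SimpleGraph.Reachable.symm ⟨p.transfer _ hp⟩))

theorem walk_decomp {α : Type u} {Q : SimpleGraph α} {x y : α} (q : Q.Walk x y) (hne : x ≠ y) :
    ∃ (z : α) (h : Q.Adj x z) (q' : Q.Walk z y), q = SimpleGraph.Walk.cons h q' := by
  cases q with
  | nil => exact absurd rfl hne
  | cons h q' => exact ⟨_, h, q', rfl⟩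

end TreeLemmas
/-! ### List machinery for the embedding of the `ℵ₀`-regular tree in the binary tree -/

section ListLemmas

/-- The embedding of `List ℕ` (vertices of `T_ℵ₀`) into binary strings. -/
def gmap : List ℕ → List Bool
  | [] => []
  | n :: t => true :: (List.replicate n false ++ gmap t)

/-- Spine vertices: `sig y k` is the `k`-th vertex of the `false`-spine above `gmap y`. -/
def sigb (y : List ℕ) (k : ℕ) : List Bool := List.replicate k false ++ gmap y

theorem sigb_zero (y : List ℕ) : sigb y 0 = gmap y := rfl

theorem sigb_succ (y : List ℕ) (k : ℕ) : sigb y (k + 1) = false :: sigb y k := by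
  simp [sigb, List.replicate_succ]

theorem gmap_cons (n : ℕ) (y : List ℕ) : gmap (n :: y) = true :: sigb y n := rfl

theorem gmap_not_false_headed (y : List ℕ) : ¬ ∃ r, gmap y = false :: r := by
  rintro ⟨r, hr⟩
  cases y with
  | nil => simp [gmap] at hr
  | cons n t => simp [gmap] at hr

theorem rep_append_eq {n n' : ℕ} {a a' : List Bool}
    (ha : ¬ ∃ r, a = false :: r) (ha' : ¬ ∃ r, a' = false :: r)
    (h : List.replicate n false ++ a = List.replicate n' false ++ a') : n = n' ∧ a = a' := by
  induction n generalizing n' with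
  | zero =>
    cases n' with
    | zero => simpa using h
    | succ m =>
      rw [List.replicate_succ] at h
      simp only [List.replicate_zero, List.nil_append, List.cons_append] at h
      exact absurd ⟨_, h⟩ ha
  | succ m ih =>
    cases n' with
    | zero =>
      rw [List.replicate_succ] at h
      simp only [List.replicate_zero, List.nil_append, List.cons_append] at h
      exact absurd ⟨_, h.symm⟩ ha'
    | succ m' =>
      rw [List.replicate_succ, List.replicate_succ] at h
      simp only [List.cons_append, List.cons.injEq] at h
      obtain ⟨h1, h2⟩ := ih h.2
      exact ⟨by omega, h2⟩

theorem gmap_inj : Function.Injective gmap := by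
  intro x
  induction x with
  | nil =>
    intro y h
    cases y with
    | nil => rfl
    | cons n t => simp [gmap] at h
  | cons n t ih =>
    intro y h
    cases y with
    | nil => simp [gmap] at h
    | cons n' t' =>
      simp only [gmap, List.cons.injEq, true_and] at h
      obtain ⟨h1, h2⟩ := rep_append_eq (gmap_not_false_headed t) (gmap_not_false_headed t') h
      rw [h1, ih h2]

theorem sigb_inj {y y' : List ℕ} {k k' : ℕ} (h : sigb y k = sigb y' k') : y = y' ∧ k = k' := by
  obtain ⟨h1, h2⟩ := rep_append_eq (gmap_not_false_headed y) (gmap_not_false_headed y') h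
  exact ⟨gmap_inj h2, h1⟩

theorem rep_split (t : List Bool) :
    (∃ n, t = List.replicate n false) ∨
      ∃ n t', t = List.replicate n false ++ true :: t' := by
  induction t with
  | nil => exact Or.inl ⟨0, rfl⟩
  | cons b t ih =>
    cases b with
    | true => exact Or.inr ⟨0, t, rfl⟩
    | false =>
      rcases ih with ⟨n, rfl⟩ | ⟨n, t', rfl⟩
      · exact Or.inl ⟨n + 1, by rw [List.replicate_succ]⟩
      · exact Or.inr ⟨n + 1, t', by rw [List.replicate_succ]; rfl⟩

theorem gmap_surj : ∀ (t : List Bool), ∃ x : List ℕ, gmap x = true :: t := by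
  have : ∀ (N : ℕ) (t : List Bool), t.length ≤ N → ∃ x : List ℕ, gmap x = true :: t := by
    intro N
    induction N with
    | zero =>
      intro t ht
      rw [Nat.le_zero, List.length_eq_zero_iff] at ht
      exact ⟨[0], by rw [ht]; rfl⟩
    | succ N ih =>
      intro t ht
      rcases rep_split t with ⟨n, rfl⟩ | ⟨n, t', rfl⟩
      · exact ⟨[n], by simp [gmap]⟩
      · obtain ⟨x, hx⟩ := ih t' (by
          rw [List.length_append, List.length_replicate, List.length_cons] at ht
          omega)
        exact ⟨n :: x, by rw [gmap_cons, sigb, hx]⟩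
  intro t
  exact this t.length t le_rfl

theorem prefix_trichotomy {α : Type*} : ∀ (a b : List α),
    a <+: b ∨ b <+: a ∨ ∃ (t : List α) (c c' : α), c ≠ c' ∧ (t ++ [c]) <+: a ∧ (t ++ [c']) <+: b := by
  intro a
  induction a with
  | nil => intro b; exact Or.inl (List.nil_prefix)
  | cons x a ih =>
    intro b
    cases b with
    | nil => exact Or.inr (Or.inl (List.nil_prefix))
    | cons y b =>
      by_cases hxy : x = y
      · subst hxy
        rcases ih b with h | h | ⟨t, c, c', hne, h1, h2⟩
        · exact Or.inl (List.cons_prefix_cons.2 ⟨rfl, h⟩)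
        · exact Or.inr (Or.inl (List.cons_prefix_cons.2 ⟨rfl, h⟩))
        · exact Or.inr (Or.inr ⟨x :: t, c, c', hne,
            by rw [List.cons_append]; exact List.cons_prefix_cons.2 ⟨rfl, h1⟩,
            by rw [List.cons_append]; exact List.cons_prefix_cons.2 ⟨rfl, h2⟩⟩)
      · exact Or.inr (Or.inr ⟨[], x, y, hxy,
          by simpa using List.cons_prefix_cons.2 ⟨rfl, List.nil_prefix a⟩,
          by simpa using List.cons_prefix_cons.2 ⟨rfl, List.nil_prefix b⟩⟩)

theorem suffix_trichotomy {α : Type*} (a b : List α) :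
    a <:+ b ∨ b <:+ a ∨ ∃ (t : List α) (c c' : α), c ≠ c' ∧ (c :: t) <:+ a ∧ (c' :: t) <:+ b := by
  rcases prefix_trichotomy a.reverse b.reverse with h | h | ⟨t, c, c', hne, h1, h2⟩
  · exact Or.inl (List.reverse_prefix.1 (by simpa using h))
  · exact Or.inr (Or.inl (List.reverse_prefix.1 (by simpa using h)))
  · refine Or.inr (Or.inr ⟨t.reverse, c, c', hne, ?_, ?_⟩)
    · apply List.reverse_prefix.1
      simpa using h1
    · apply List.reverse_prefix.1
      simpa using h2

end ListLemmas
/-! ### The subdivision package and cones -/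

/-- All data of a finitely separating spanning tree of a quotient graph together with a
subdivision of the binary tree inside it. -/
structure SubdivPkg {W : Type u} (Γ : SimpleGraph W) where
  T : SimpleGraph (ClassOf Γ)
  hle : T ≤ tildeGraph Γ
  htree : T.IsTree
  hcut : ∀ a b : ClassOf Γ, T.Adj a b → (FundCut (tildeGraph Γ) T a b).Finite
  f : List Bool → ClassOf Γ
  hf : Function.Injective f
  p : ∀ ⦃x y : List Bool⦄, binaryTree.Adj x y → T.Walk (f x) (f y)
  hpath : ∀ ⦃x y⦄ (h : binaryTree.Adj x y), (p h).IsPath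
  hbr : ∀ ⦃x y⦄ (h : binaryTree.Adj x y), ∀ w, f w ∈ (p h).support → w = x ∨ w = y
  hdisj : ∀ ⦃x y x' y'⦄ (h : binaryTree.Adj x y) (h' : binaryTree.Adj x' y'),
      s(x, y) ≠ s(x', y') → ∀ z, z ∈ (p h).support → z ∈ (p h').support →
        (z = f x ∨ z = f y) ∧ (z = f x' ∨ z = f y')

namespace SubdivPkg

variable {W : Type u} {Γ : SimpleGraph W} (S : SubdivPkg Γ)

theorem bAdj (b : Bool) (t : List Bool) : binaryTree.Adj (b :: t) t :=
  Or.inl ⟨b, rfl⟩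

/-- The subdivision path from `f (b :: t)` up to `f t`. -/
def up (b : Bool) (t : List Bool) : S.T.Walk (S.f (b :: t)) (S.f t) := S.p (bAdj b t)

theorem fne (b : Bool) (t : List Bool) : S.f (b :: t) ≠ S.f t :=
  fun h => List.cons_ne_self b t (S.hf h)

theorem up_exists (b : Bool) (t : List Bool) :
    ∃ (z : ClassOf Γ) (h : S.T.Adj (S.f (b :: t)) z) (q : S.T.Walk z (S.f t)),
      S.up b t = SimpleGraph.Walk.cons h q :=
  walk_decomp (S.up b t) (S.fne b t)

/-- The second vertex of the subdivision path from `f (b :: t)` up to `f t`. -/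
noncomputable def snd (b : Bool) (t : List Bool) : ClassOf Γ := (S.up_exists b t).choose

theorem snd_adj (b : Bool) (t : List Bool) : S.T.Adj (S.f (b :: t)) (S.snd b t) :=
  (S.up_exists b t).choose_spec.choose

/-- The tail of the subdivision path. -/
noncomputable def tailW (b : Bool) (t : List Bool) : S.T.Walk (S.snd b t) (S.f t) :=
  (S.up_exists b t).choose_spec.choose_spec.choose

theorem up_eq (b : Bool) (t : List Bool) :
    S.up b t = SimpleGraph.Walk.cons (S.snd_adj b t) (S.tailW b t) :=
  (S.up_exists b t).choose_spec.choose_spec.choose_spec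

/-- The lowest edge of the subdivision path above `f (b :: t)`. -/
noncomputable def es (b : Bool) (t : List Bool) : Sym2 (ClassOf Γ) :=
  s(S.f (b :: t), S.snd b t)

/-- The tree minus the lowest edge above `f (b :: t)`. -/
noncomputable def Td (b : Bool) (t : List Bool) : SimpleGraph (ClassOf Γ) :=
  S.T.deleteEdges {S.es b t}

theorem mem_Td_edgeSet {b : Bool} {t : List Bool} {e : Sym2 (ClassOf Γ)} :
    e ∈ (S.Td b t).edgeSet ↔ e ∈ S.T.edgeSet ∧ e ≠ S.es b t := by
  show e ∈ (S.T.deleteEdges {S.es b t}).edgeSet ↔ _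
  rw [SimpleGraph.edgeSet_deleteEdges]
  simp [Set.mem_diff]

/-- The cone above the binary string `s`: the component of `f s` after the edge `es`
below it is removed (everything, for `s = []`). -/
noncomputable def cone : List Bool → Set (ClassOf Γ)
  | [] => Set.univ
  | b :: t => {Y | (S.Td b t).Reachable (S.f (b :: t)) Y}

theorem up_edges (b : Bool) (t : List Bool) :
    (S.up b t).edges = S.es b t :: (S.tailW b t).edges := by
  rw [S.up_eq b t]; rfl

theorem up_edges_nodup (b : Bool) (t : List Bool) : (S.up b t).edges.Nodup :=
  (S.hpath (bAdj b t)).edges_nodup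

theorem es_not_mem_tailW (b : Bool) (t : List Bool) : S.es b t ∉ (S.tailW b t).edges := by
  have h := S.up_edges_nodup b t
  rw [S.up_edges, List.nodup_cons] at h
  exact h.1

theorem snd_mem_up_support (b : Bool) (t : List Bool) : S.snd b t ∈ (S.up b t).support := by
  rw [S.up_eq b t, SimpleGraph.Walk.support_cons]
  exact List.mem_cons_of_mem _ (SimpleGraph.Walk.start_mem_support _)

theorem snd_ne_f (b : Bool) (t : List Bool) : S.snd b t ≠ S.f (b :: t) :=
  (S.snd_adj b t).ne'

theorem es_not_mem_up {b : Bool} {t : List Bool} {c : Bool} {t' : List Bool}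
    (hne : s((b : Bool) :: t, t) ≠ s(c :: t', t')) :
    S.es c t' ∉ (S.up b t).edges := by
  intro hmem
  have hfc : S.f (c :: t') ∈ (S.up b t).support :=
    SimpleGraph.Walk.fst_mem_support_of_mem_edges _ hmem
  have hsnd : S.snd c t' ∈ (S.up b t).support :=
    SimpleGraph.Walk.snd_mem_support_of_mem_edges _ hmem
  rcases S.hbr (bAdj b t) (c :: t') hfc with h1 | h1
  · -- c :: t' = b :: t : then the two binary edges coincide
    apply hne
    rw [h1]
    have : t' = t := by
      have := congrArg List.tail h1
      simpa using this
    rw [this]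
  · -- c :: t' = t
    have hsnd2 : S.snd c t' ∈ (S.up c t').support := S.snd_mem_up_support c t'
    have hsym : s((b : Bool) :: t, t) ≠ s((c : Bool) :: t', t') := hne
    obtain ⟨hA, hB⟩ := S.hdisj (bAdj b t) (bAdj c t') hsym (S.snd c t') hsnd hsnd2
    rcases hB with hB | hB
    · exact S.snd_ne_f c t' hB
    · -- snd c t' = f t'
      rcases hA with hA | hA
      · -- f t' = f (b :: t) : t' = b :: t, but t = c :: t'
        have : t' = b :: t := S.hf (hB.symm.trans hA)
        rw [← h1] at this
        have := congrArg List.length this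
        simp at this
        omega
      · -- f t' = f t : t' = t, but t = c :: t'
        have ht' : t' = t := S.hf (hB.symm.trans hA)
        rw [← h1] at ht'
        exact List.cons_ne_self c t' ht'.symm

theorem f_mem_cone (s : List Bool) : S.f s ∈ S.cone s := by
  cases s with
  | nil => exact Set.mem_univ _
  | cons b t => exact SimpleGraph.Reachable.refl _

theorem tailW_reach (b : Bool) (t : List Bool) :
    (S.Td b t).Reachable (S.snd b t) (S.f t) := by
  refine ⟨(S.tailW b t).transfer _ ?_⟩
  intro e he
  rw [S.mem_Td_edgeSet]
  refine ⟨(S.tailW b t).edges_subset_edgeSet he, ?_⟩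
  rintro rfl
  exact S.es_not_mem_tailW b t he

theorem f_parent_not_mem_cone (b : Bool) (t : List Bool) : S.f t ∉ S.cone (b :: t) := by
  intro hmem
  have h1 : (S.Td b t).Reachable (S.f (b :: t)) (S.f t) := hmem
  have h2 : (S.Td b t).Reachable (S.f (b :: t)) (S.snd b t) :=
    h1.trans (S.tailW_reach b t).symm
  exact not_reach_del_of_adj S.htree.2 (S.snd_adj b t) h2

theorem not_mem_cone_of_reach {b : Bool} {t : List Bool} {Y : ClassOf Γ}
    (h : (S.Td b t).Reachable (S.f t) Y) : Y ∉ S.cone (b :: t) := by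
  intro hY
  exact S.f_parent_not_mem_cone b t ((hY : (S.Td b t).Reachable _ _).trans h.symm)

/-- Sym2-distinctness of the binary tree edge `(b::t, t)` from `(c::t', t')` when `t = c :: t'`. -/
theorem binEdge_ne_of_parent {b c : Bool} {t' : List Bool} :
    s((b : Bool) :: (c :: t'), (c :: t' : List Bool)) ≠ s((c : Bool) :: t', t') := by
  intro h
  rw [Sym2.eq_iff] at h
  rcases h with ⟨h1, h2⟩ | ⟨h1, h2⟩
  · have := congrArg List.length h1
    simp at this
  · have := congrArg List.length h1
    simp at this
    omega

theorem cone_cons_subset (b : Bool) (t : List Bool) : S.cone (b :: t) ⊆ S.cone t := by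
  cases t with
  | nil => exact fun Y _ => Set.mem_univ Y
  | cons c t' =>
    intro Y hY
    classical
    obtain ⟨w⟩ := (hY : (S.Td b (c :: t')).Reachable _ _)
    by_cases hcross : S.es c t' ∈ w.edges
    · -- then f (c :: t') lies on w, contradicting that f t ∉ cone (b :: t)
      exfalso
      have hfc : S.f (c :: t') ∈ w.support :=
        SimpleGraph.Walk.fst_mem_support_of_mem_edges _ hcross
      exact S.f_parent_not_mem_cone b (c :: t') ⟨w.takeUntil _ hfc⟩
    · -- transfer w into Td c t'
      have hw : ∀ e ∈ w.edges, e ∈ (S.Td c t').edgeSet := by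
        intro e he
        rw [S.mem_Td_edgeSet]
        have h1 := w.edges_subset_edgeSet he
        rw [S.mem_Td_edgeSet] at h1
        refine ⟨h1.1, ?_⟩
        rintro rfl
        exact hcross he
      have h2 : (S.Td c t').Reachable (S.f (b :: c :: t')) Y := ⟨w.transfer _ hw⟩
      have h3 : (S.Td c t').Reachable (S.f (c :: t')) (S.f (b :: c :: t')) := by
        refine ⟨((S.up b (c :: t')).transfer _ ?_).reverse⟩
        intro e he
        rw [S.mem_Td_edgeSet]
        refine ⟨(S.up b (c :: t')).edges_subset_edgeSet he, ?_⟩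
        rintro rfl
        exact S.es_not_mem_up binEdge_ne_of_parent he
      exact h3.trans h2

theorem cone_append_subset (w t : List Bool) : S.cone (w ++ t) ⊆ S.cone t := by
  induction w with
  | nil => simp
  | cons c w ih => exact (S.cone_cons_subset c (w ++ t)).trans ih

/-- Distinctness of sibling binary edges. -/
theorem binEdge_ne_sibling {b c : Bool} {t : List Bool} (hbc : b ≠ c) :
    s((c : Bool) :: t, t) ≠ s((b : Bool) :: t, t) := by
  intro h
  rw [Sym2.eq_iff] at h
  rcases h with ⟨h1, h2⟩ | ⟨h1, h2⟩
  · exact hbc (by simpa using h1.symm)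
  · exact List.cons_ne_self c t h1

theorem f_sibling_not_mem_cone {b c : Bool} (t : List Bool) (hbc : b ≠ c) :
    S.f (c :: t) ∉ S.cone (b :: t) := by
  apply S.not_mem_cone_of_reach
  refine ⟨((S.up c t).transfer _ ?_).reverse⟩
  intro e he
  rw [S.mem_Td_edgeSet]
  refine ⟨(S.up c t).edges_subset_edgeSet he, ?_⟩
  rintro rfl
  exact S.es_not_mem_up (binEdge_ne_sibling hbc) he

theorem cone_sibling_disjoint {b c : Bool} (t : List Bool) (hbc : b ≠ c) {Y : ClassOf Γ}
    (h1 : Y ∈ S.cone (b :: t)) (h2 : Y ∈ S.cone (c :: t)) : False := by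
  classical
  obtain ⟨w⟩ := (h2 : (S.Td c t).Reachable _ _)
  by_cases hcross : S.es b t ∈ w.edges
  · have hfb : S.f (b :: t) ∈ w.support :=
      SimpleGraph.Walk.fst_mem_support_of_mem_edges _ hcross
    exact S.f_sibling_not_mem_cone t (Ne.symm hbc) ⟨w.takeUntil _ hfb⟩
  · have hw : ∀ e ∈ w.edges, e ∈ (S.Td b t).edgeSet := by
      intro e he
      rw [S.mem_Td_edgeSet]
      have h3 := w.edges_subset_edgeSet he
      rw [S.mem_Td_edgeSet] at h3
      refine ⟨h3.1, ?_⟩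
      rintro rfl
      exact hcross he
    have h4 : (S.Td b t).Reachable (S.f (c :: t)) Y := ⟨w.transfer _ hw⟩
    exact S.f_sibling_not_mem_cone t hbc
      ((h1 : (S.Td b t).Reachable _ _).trans h4.symm : (S.Td b t).Reachable _ _)

theorem cone_disjoint_incomp {s s' : List Bool} (h1 : ¬ s <:+ s') (h2 : ¬ s' <:+ s)
    {Y : ClassOf Γ} (hY : Y ∈ S.cone s) (hY' : Y ∈ S.cone s') : False := by
  rcases suffix_trichotomy s s' with h | h | ⟨t, c, c', hne, hc, hc'⟩
  · exact h1 h
  · exact h2 h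
  · obtain ⟨w1, hw1⟩ := hc
    obtain ⟨w2, hw2⟩ := hc'
    rw [← hw1] at hY
    rw [← hw2] at hY'
    exact S.cone_sibling_disjoint t hne (S.cone_append_subset w1 _ hY)
      (S.cone_append_subset w2 _ hY')

end SubdivPkg
/-- The vertices of `Γ` lying in some class of `A`. -/
def VCl {W : Type u} {Γ : SimpleGraph W} (A : Set (ClassOf Γ)) : Set W := {w | ∃ X ∈ A, w ∈ X.1}

theorem VCl_mono {W : Type u} {Γ : SimpleGraph W} {A B : Set (ClassOf Γ)} (h : A ⊆ B) :
    (VCl A : Set W) ⊆ VCl B := by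
  rintro w ⟨X, hX, hw⟩
  exact ⟨X, h hX, hw⟩

namespace SubdivPkg

variable {W : Type u} {Γ : SimpleGraph W} (S : SubdivPkg Γ)

theorem mem_cone_iff {b : Bool} {t : List Bool} {Y : ClassOf Γ} :
    Y ∈ S.cone (b :: t) ↔ (S.Td b t).Reachable (S.f (b :: t)) Y := Iff.rfl

theorem tailW_edges_subset (b : Bool) (t : List Bool) :
    ∀ e ∈ (S.tailW b t).edges, e ∈ (S.up b t).edges := by
  intro e he
  rw [S.up_edges]
  exact List.mem_cons_of_mem _ he

theorem snd_mem_cone (b : Bool) (t : List Bool) : S.snd b t ∈ S.cone t := by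
  cases t with
  | nil => exact Set.mem_univ _
  | cons c t' =>
    rw [S.mem_cone_iff]
    refine SimpleGraph.Reachable.symm ⟨(S.tailW b (c :: t')).transfer _ ?_⟩
    intro e he
    rw [S.mem_Td_edgeSet]
    refine ⟨(S.tailW b (c :: t')).edges_subset_edgeSet he, ?_⟩
    rintro rfl
    exact S.es_not_mem_up binEdge_ne_of_parent (S.tailW_edges_subset b (c :: t') _ he)

theorem snd_not_mem_cone_child (b c : Bool) (t : List Bool) :
    S.snd b t ∉ S.cone (c :: t) := by
  apply S.not_mem_cone_of_reach
  refine SimpleGraph.Reachable.symm ⟨(S.tailW b t).transfer _ ?_⟩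
  intro e he
  rw [S.mem_Td_edgeSet]
  refine ⟨(S.tailW b t).edges_subset_edgeSet he, ?_⟩
  rintro rfl
  by_cases hbc : b = c
  · subst hbc
    exact S.es_not_mem_tailW b t he
  · exact S.es_not_mem_up (Ne.symm (binEdge_ne_sibling hbc))
      (S.tailW_edges_subset b t _ he)

/-- The `k`-th piece of the branch decomposition above `gmap y`. -/
noncomputable def Ek (y : List ℕ) (k : ℕ) : Set (ClassOf Γ) :=
  S.cone (sigb y k) \ (S.cone (sigb y (k + 1)) ∪ S.cone (true :: sigb y k))

/-- The classes forming the branch set indexed by `y`. -/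
noncomputable def Dcl (y : List ℕ) : Set (ClassOf Γ) := ⋃ k, S.Ek y k


/-- Adjacency (in `T`) within a set of classes. -/
def rel (A : Set (ClassOf Γ)) (X Y : ClassOf Γ) : Prop := X ∈ A ∧ Y ∈ A ∧ S.T.Adj X Y


theorem Ek_subset_Dcl (y : List ℕ) (k : ℕ) : S.Ek y k ⊆ S.Dcl y :=
  Set.subset_iUnion (fun k => S.Ek y k) k

theorem f_sigb_mem_Ek (y : List ℕ) (k : ℕ) : S.f (sigb y k) ∈ S.Ek y k := by
  refine ⟨S.f_mem_cone _, ?_⟩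
  rintro (h | h)
  · rw [sigb_succ] at h
    exact S.f_parent_not_mem_cone false (sigb y k) h
  · exact S.f_parent_not_mem_cone true (sigb y k) h

theorem snd_mem_Ek (b : Bool) (y : List ℕ) (k : ℕ) : S.snd b (sigb y k) ∈ S.Ek y k := by
  refine ⟨S.snd_mem_cone b _, ?_⟩
  rintro (h | h)
  · rw [sigb_succ] at h
    exact S.snd_not_mem_cone_child b false (sigb y k) h
  · exact S.snd_not_mem_cone_child b true (sigb y k) h

theorem rel_symm (A : Set (ClassOf Γ)) : Symmetric (S.rel A) :=
  fun _ _ ⟨h1, h2, h3⟩ => ⟨h2, h1, h3.symm⟩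

theorem rtg_symm {A : Set (ClassOf Γ)} {X Y : ClassOf Γ}
    (h : Relation.ReflTransGen (S.rel A) X Y) : Relation.ReflTransGen (S.rel A) Y X :=
  by
  haveI : Std.Symm (S.rel A) := ⟨fun a b hab => S.rel_symm A hab⟩
  exact Relation.ReflTransGen.symmetric.symm _ _ h

theorem rtg_mono {A B : Set (ClassOf Γ)} (hAB : A ⊆ B) {X Y : ClassOf Γ}
    (h : Relation.ReflTransGen (S.rel A) X Y) : Relation.ReflTransGen (S.rel B) X Y :=
  Relation.ReflTransGen.mono (fun _ _ ⟨h1, h2, h3⟩ => ⟨hAB h1, hAB h2, h3⟩) _ _ h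

theorem walk_to_rtg {A : Set (ClassOf Γ)} :
    ∀ {X Y : ClassOf Γ} (q : S.T.Walk X Y), (∀ z ∈ q.support, z ∈ A) →
      Relation.ReflTransGen (S.rel A) X Y := by
  intro X Y q
  induction q with
  | nil => intro _; exact Relation.ReflTransGen.refl
  | @cons a c y h q ih =>
    intro hsup
    refine Relation.ReflTransGen.head
      ⟨hsup _ (SimpleGraph.Walk.start_mem_support _), ?_, h⟩
      (ih fun z hz => hsup z ?_)
    · refine hsup _ ?_
      rw [SimpleGraph.Walk.support_cons]
      exact List.mem_cons_of_mem _ q.start_mem_support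
    · rw [SimpleGraph.Walk.support_cons]
      exact List.mem_cons_of_mem _ hz

theorem no_double_cross {c : Bool} {t : List Bool} {X Y : ClassOf Γ}
    (q : S.T.Walk X Y) (hnd : q.edges.Nodup) (hX : X ∉ S.cone (c :: t))
    (hY : Y ∉ S.cone (c :: t)) {z : ClassOf Γ} (hz : z ∈ q.support) :
    z ∉ S.cone (c :: t) := by
  classical
  intro hzc
  rw [S.mem_cone_iff] at hzc hX hY
  have h1 : S.es c t ∈ (q.takeUntil z hz).edges :=
    walk_cross hX hzc (q.takeUntil z hz)
  have h2 : S.es c t ∈ (q.dropUntil z hz).edges := by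
    have := walk_cross hY hzc ((q.dropUntil z hz).reverse)
    rw [SimpleGraph.Walk.edges_reverse, List.mem_reverse] at this
    exact this
  have hspec := q.take_spec hz
  have heq : q.edges = (q.takeUntil z hz).edges ++ (q.dropUntil z hz).edges := by
    rw [← SimpleGraph.Walk.edges_append, hspec]
  rw [heq, List.nodup_append] at hnd
  exact hnd.2.2 _ h1 _ h2 rfl

theorem exists_good_walk {s : List Bool} {Y : ClassOf Γ} (hY : Y ∈ S.cone s) :
    ∃ q : S.T.Walk (S.f s) Y, q.edges.Nodup ∧ ∀ z ∈ q.support, z ∈ S.cone s := by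
  classical
  cases s with
  | nil =>
    obtain ⟨q0⟩ := S.htree.1.preconnected (S.f []) Y
    exact ⟨q0.bypass, q0.bypass_isPath.isTrail.edges_nodup, fun z _ => Set.mem_univ z⟩
  | cons b t =>
    obtain ⟨w0⟩ := (S.mem_cone_iff.1 hY)
    have hq1e : ∀ e ∈ w0.bypass.edges, e ∈ S.T.edgeSet := fun e he =>
      (S.mem_Td_edgeSet.1 (w0.bypass.edges_subset_edgeSet he)).1
    refine ⟨w0.bypass.transfer S.T hq1e, ?_, ?_⟩
    · rw [SimpleGraph.Walk.edges_transfer]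
      exact w0.bypass_isPath.isTrail.edges_nodup
    · intro z hz
      rw [SimpleGraph.Walk.support_transfer] at hz
      rw [S.mem_cone_iff]
      exact ⟨w0.bypass.takeUntil z hz⟩

theorem chain_Ek {y : List ℕ} {k : ℕ} {Y : ClassOf Γ} (hY : Y ∈ S.Ek y k) :
    Relation.ReflTransGen (S.rel (S.Ek y k)) (S.f (sigb y k)) Y := by
  obtain ⟨q, hnd, hsupcone⟩ := S.exists_good_walk hY.1
  have hsupE : ∀ z ∈ q.support, z ∈ S.Ek y k := by
    intro z hz
    refine ⟨hsupcone z hz, ?_⟩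
    rintro (hmem | hmem)
    · rw [sigb_succ] at hmem
      refine S.no_double_cross q hnd (S.f_parent_not_mem_cone false (sigb y k)) ?_ hz hmem
      intro h
      refine hY.2 (Or.inl ?_)
      rw [sigb_succ]
      exact h
    · refine S.no_double_cross q hnd (S.f_parent_not_mem_cone true (sigb y k)) ?_ hz hmem
      exact fun h => hY.2 (Or.inr h)
  exact S.walk_to_rtg q hsupE

theorem chain_Dcl_down (y : List ℕ) (k : ℕ) :
    Relation.ReflTransGen (S.rel (S.Dcl y)) (S.f (sigb y k)) (S.f (gmap y)) := by
  induction k with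
  | zero => rw [sigb_zero]
  | succ k ih =>
    have hadj : S.T.Adj (S.f (sigb y (k + 1))) (S.snd false (sigb y k)) := by
      rw [sigb_succ]
      exact S.snd_adj false (sigb y k)
    have h1 : Relation.ReflTransGen (S.rel (S.Dcl y)) (S.f (sigb y (k + 1)))
        (S.snd false (sigb y k)) :=
      Relation.ReflTransGen.single
        ⟨S.Ek_subset_Dcl y (k + 1) (S.f_sigb_mem_Ek y (k + 1)),
         S.Ek_subset_Dcl y k (S.snd_mem_Ek false y k), hadj⟩
    have h2 : Relation.ReflTransGen (S.rel (S.Dcl y)) (S.snd false (sigb y k))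
        (S.f (sigb y k)) :=
      S.rtg_mono (S.Ek_subset_Dcl y k) (S.rtg_symm (S.chain_Ek (S.snd_mem_Ek false y k)))
    exact (h1.trans h2).trans ih

theorem chain_Dcl {y : List ℕ} {X : ClassOf Γ} (hX : X ∈ S.Dcl y) :
    Relation.ReflTransGen (S.rel (S.Dcl y)) X (S.f (gmap y)) := by
  obtain ⟨k, hk⟩ := Set.mem_iUnion.1 hX
  exact (S.rtg_mono (S.Ek_subset_Dcl y k) (S.rtg_symm (S.chain_Ek hk))).trans
    (S.chain_Dcl_down y k)

theorem Ek_disjoint {y y' : List ℕ} (hne : y ≠ y') {k j : ℕ} {Y : ClassOf Γ}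
    (h1 : Y ∈ S.Ek y k) (h2 : Y ∈ S.Ek y' j) : False := by
  have key : ∀ (a b : List ℕ) (ka kb : ℕ) (Z : ClassOf Γ), a ≠ b → Z ∈ S.Ek a ka →
      Z ∈ S.Ek b kb → sigb a ka <:+ sigb b kb → False := by
    rintro a b ka kb Z hab hZa hZb ⟨w, hw⟩
    rcases List.eq_nil_or_concat w with rfl | ⟨L, c, rfl⟩
    · rw [List.nil_append] at hw
      exact hab (sigb_inj hw).1
    · have hsub : S.cone (sigb b kb) ⊆ S.cone (c :: sigb a ka) := by
        rw [← hw, List.concat_eq_append, List.append_assoc, List.singleton_append]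
        exact S.cone_append_subset L _
      have hYc := hsub hZb.1
      cases c with
      | false =>
        refine hZa.2 (Or.inl ?_)
        rw [sigb_succ]
        exact hYc
      | true => exact hZa.2 (Or.inr hYc)
  by_cases hs1 : sigb y k <:+ sigb y' j
  · exact key y y' k j Y hne h1 h2 hs1
  by_cases hs2 : sigb y' j <:+ sigb y k
  · exact key y' y j k Y (Ne.symm hne) h2 h1 hs2
  · exact S.cone_disjoint_incomp hs1 hs2 h1.1 h2.1

theorem conn_of_rtg {A : Set (ClassOf Γ)}
    (H1 : ∀ X ∈ A, ∀ x1 ∈ X.1, ∀ x2 ∈ X.1, ∃ q : Γ.Walk x1 x2, ∀ z ∈ q.support, z ∈ VCl A)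
    {X Y : ClassOf Γ} (hX : X ∈ A) (hrtg : Relation.ReflTransGen (S.rel A) X Y) :
    ∀ x ∈ X.1, ∀ y ∈ Y.1, ∃ q : Γ.Walk x y, ∀ z ∈ q.support, z ∈ VCl A := by
  induction hrtg with
  | refl => exact H1 X hX
  | @tail B C hXB hBC ih =>
    obtain ⟨hB, hC, hadj⟩ := hBC
    intro x hx y hy
    obtain ⟨hne, b1, hb1, c1, hc1, hadjG⟩ := S.hle hadj
    obtain ⟨q1, hq1⟩ := ih x hx b1 hb1
    obtain ⟨q2, hq2⟩ := H1 C hC c1 hc1 y hy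
    refine ⟨q1.append (SimpleGraph.Walk.cons hadjG q2), ?_⟩
    intro z hz
    rw [SimpleGraph.Walk.support_append, List.mem_append] at hz
    rcases hz with hz | hz
    · exact hq1 z hz
    · have hz2 : z ∈ (SimpleGraph.Walk.cons hadjG q2).support := List.mem_of_mem_tail hz
      rw [SimpleGraph.Walk.support_cons, List.mem_cons] at hz2
      rcases hz2 with rfl | hz2
      · exact ⟨B, hB, hb1⟩
      · exact hq2 z hz2

end SubdivPkg
section FiberFinite

variable {W : Type u} {Γ : SimpleGraph W}

theorem fiber_finite (q : Sym2 (ClassOf Γ)) :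
    {e : Sym2 W | (∃ a b : W, Γ.Adj a b ∧ e = s(a, b) ∧ cls Γ a ≠ cls Γ b) ∧
      Sym2.map (cls Γ) e = q}.Finite := by
  induction q using Sym2.ind with
  | _ Q1 Q2 =>
    by_cases hQ : Q1 = Q2
    · subst hQ
      have : {e : Sym2 W | (∃ a b : W, Γ.Adj a b ∧ e = s(a, b) ∧ cls Γ a ≠ cls Γ b) ∧
          Sym2.map (cls Γ) e = s(Q1, Q1)} = ∅ := by
        apply Set.eq_empty_iff_forall_notMem.2
        rintro e ⟨⟨a, b, hadj, rfl, hne⟩, hmap⟩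
        rw [Sym2.map_pair_eq, Sym2.eq_iff] at hmap
        rcases hmap with ⟨h1, h2⟩ | ⟨h1, h2⟩ <;> exact hne (h1.trans h2.symm)
      rw [this]
      exact Set.finite_empty
    · refine ((edges_between_finite (X := Q1) (Y := Q2) hQ).union
        (edges_between_finite (X := Q2) (Y := Q1) (Ne.symm hQ))).subset ?_
      rintro e ⟨⟨a, b, hadj, rfl, hne⟩, hmap⟩
      rw [Sym2.map_pair_eq, Sym2.eq_iff] at hmap
      rcases hmap with ⟨h1, h2⟩ | ⟨h1, h2⟩
      · exact Or.inl ⟨a, by rw [← h1]; exact mem_cls a, b, by rw [← h2]; exact mem_cls b,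
          hadj, rfl⟩
      · exact Or.inr ⟨a, by rw [← h1]; exact mem_cls a, b, by rw [← h2]; exact mem_cls b,
          hadj, rfl⟩

end FiberFinite

namespace SubdivPkg

variable {W : Type u} {Γ : SimpleGraph W} (S : SubdivPkg Γ)

/-- The relevant finite fundamental cut below a binary string. -/
noncomputable def cutOf : List Bool → Set (Sym2 (ClassOf Γ))
  | [] => ∅
  | b :: t => FundCut (tildeGraph Γ) S.T (S.snd b t) (S.f (b :: t))

theorem cutOf_finite (s : List Bool) : (S.cutOf s).Finite := by
  cases s with
  | nil => exact Set.finite_empty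
  | cons b t => exact S.hcut _ _ (S.snd_adj b t).symm

theorem cross_mem_cutOf {s : List Bool} {X Y : ClassOf Γ} (hX : X ∈ S.cone s)
    (hY : Y ∉ S.cone s) (hadj : (tildeGraph Γ).Adj X Y) : s(X, Y) ∈ S.cutOf s := by
  cases s with
  | nil => exact absurd (Set.mem_univ Y) hY
  | cons b t =>
    have hset : S.T.deleteEdges {s(S.snd b t, S.f (b :: t))} = S.Td b t := by
      rw [Sym2.eq_swap]
      rfl
    have hsndY : (S.Td b t).Reachable (S.snd b t) Y := by
      rcases reach_del_or S.htree.1 (S.f (b :: t)) (S.snd b t) Y with h | h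
      · exact absurd h hY
      · exact h
    refine ⟨(tildeGraph Γ).mem_edgeSet.2 hadj, Y, X, Sym2.eq_swap, ?_, ?_⟩
    · rw [hset]
      exact hsndY
    · rw [hset]
      exact hX

theorem delta_Ek_finite (y : List ℕ) (k : ℕ) :
    (edgeBoundary Γ (VCl (S.Ek y k))).Finite := by
  classical
  have hBIGfin : (S.cutOf (sigb y k) ∪ S.cutOf (sigb y (k + 1)) ∪
      S.cutOf (true :: sigb y k)).Finite :=
    ((S.cutOf_finite _).union (S.cutOf_finite _)).union (S.cutOf_finite _)
  refine (Set.Finite.biUnion hBIGfin (fun q _ => fiber_finite q)).subset ?_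
  rintro e ⟨a, ha, b, hb, hadj, rfl⟩
  obtain ⟨X, hXA, haX⟩ := ha
  have haX' : X = cls Γ a := cls_eq_of_mem haX
  have hbB : cls Γ b ∉ S.Ek y k := fun h => hb ⟨cls Γ b, h, mem_cls b⟩
  have hne : X ≠ cls Γ b := fun h => hb ⟨X, hXA, by rw [h]; exact mem_cls b⟩
  have hTGadj : (tildeGraph Γ).Adj X (cls Γ b) := ⟨hne, a, haX, b, mem_cls b, hadj⟩
  have hq : ∃ q ∈ S.cutOf (sigb y k) ∪ S.cutOf (sigb y (k + 1)) ∪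
      S.cutOf (true :: sigb y k), Sym2.map (cls Γ) s(a, b) = q := by
    rw [Sym2.map_pair_eq, ← haX']
    by_cases h1 : cls Γ b ∈ S.cone (sigb y k)
    · by_cases h2 : cls Γ b ∈ S.cone (sigb y (k + 1))
      · refine ⟨s(cls Γ b, X), Or.inl (Or.inr (S.cross_mem_cutOf h2 ?_ hTGadj.symm)),
          Sym2.eq_swap⟩
        exact fun h => hXA.2 (Or.inl h)
      · by_cases h3 : cls Γ b ∈ S.cone (true :: sigb y k)
        · refine ⟨s(cls Γ b, X), Or.inr (S.cross_mem_cutOf h3 ?_ hTGadj.symm), Sym2.eq_swap⟩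
          exact fun h => hXA.2 (Or.inr h)
        · refine absurd ⟨h1, ?_⟩ hbB
          rintro (h | h)
          · exact h2 h
          · exact h3 h
    · exact ⟨s(X, cls Γ b), Or.inl (Or.inl (S.cross_mem_cutOf hXA.1 h1 hTGadj)), rfl⟩
  obtain ⟨q, hqB, hqe⟩ := hq
  refine Set.mem_biUnion hqB ⟨⟨a, b, hadj, rfl, ?_⟩, hqe⟩
  rw [← haX']
  exact hne

theorem walk_within_Ek {y : List ℕ} {k : ℕ} {X : ClassOf Γ} (hX : X ∈ S.Ek y k)
    {x1 x2 : W} (h1 : x1 ∈ X.1) (h2 : x2 ∈ X.1) :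
    ∃ q : Γ.Walk x1 x2, ∀ z ∈ q.support, z ∈ VCl (S.Ek y k) := by
  obtain ⟨q, hq⟩ := exists_walk_avoiding (not_finSep_of_mem h1 h2) (S.delta_Ek_finite y k)
  exact ⟨q, walk_stay q ⟨X, hX, h1⟩ hq⟩

theorem H1_of_sub {A : Set (ClassOf Γ)} (hsub : ∀ X ∈ A, ∃ y k, X ∈ S.Ek y k ∧ S.Ek y k ⊆ A) :
    ∀ X ∈ A, ∀ x1 ∈ X.1, ∀ x2 ∈ X.1, ∃ q : Γ.Walk x1 x2, ∀ z ∈ q.support, z ∈ VCl A := by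
  intro X hX x1 h1 x2 h2
  obtain ⟨y, k, hXE, hEA⟩ := hsub X hX
  obtain ⟨q, hq⟩ := S.walk_within_Ek hXE h1 h2
  exact ⟨q, fun z hz => VCl_mono hEA (hq z hz)⟩

theorem walk_in_Dcl (y : List ℕ) {x1 x2 : W} (h1 : x1 ∈ VCl (S.Dcl y))
    (h2 : x2 ∈ VCl (S.Dcl y)) :
    ∃ q : Γ.Walk x1 x2, ∀ z ∈ q.support, z ∈ VCl (S.Dcl y) := by
  obtain ⟨X, hX, hx1⟩ := h1
  obtain ⟨Y, hY, hx2⟩ := h2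
  have H1 := S.H1_of_sub (A := S.Dcl y) (fun X hX => by
    obtain ⟨k, hk⟩ := Set.mem_iUnion.1 hX
    exact ⟨y, k, hk, S.Ek_subset_Dcl y k⟩)
  exact S.conn_of_rtg H1 hX ((S.chain_Dcl hX).trans (S.rtg_symm (S.chain_Dcl hY)))
    x1 hx1 x2 hx2

theorem root_not_mem_cone (b : Bool) (t : List Bool) : S.f [] ∉ S.cone (b :: t) := by
  rcases List.eq_nil_or_concat (b :: t) with h | ⟨L, c, hL⟩
  · simp at h
  · rw [hL, List.concat_eq_append]
    intro hmem
    exact S.f_parent_not_mem_cone c [] (S.cone_append_subset L [c] hmem)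

theorem cone_total (Y : ClassOf Γ) : ∃ y k, Y ∈ S.Ek y k := by
  classical
  obtain ⟨q0⟩ := S.htree.1.preconnected (S.f []) Y
  have hSY : {s : List Bool | Y ∈ S.cone s}.Finite := by
    have hsub : {s : List Bool | Y ∈ S.cone s} ⊆
        insert [] (S.f ⁻¹' {z | z ∈ q0.support}) := by
      intro s hs
      cases s with
      | nil => exact Set.mem_insert _ _
      | cons b t =>
        refine Set.mem_insert_of_mem _ ?_
        have hcr : S.es b t ∈ q0.edges :=
          walk_cross (S.root_not_mem_cone b t) (hs : Y ∈ S.cone (b :: t)) q0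
        exact SimpleGraph.Walk.fst_mem_support_of_mem_edges _ hcr
    exact ((Set.Finite.preimage S.hf.injOn (List.finite_toSet q0.support)).insert []).subset hsub
  obtain ⟨s0, hs0, hmax⟩ := Set.Finite.exists_maximalFor List.length _ hSY
    ⟨[], Set.mem_univ Y⟩
  have hnext : ∀ c : Bool, Y ∉ S.cone (c :: s0) := by
    intro c hc
    have h1 := @hmax (c :: s0) hc (by simp)
    simp at h1
  rcases rep_split s0 with ⟨k, hrep⟩ | ⟨k, t', hs⟩
  · have hsig : sigb [] k = s0 := by
      rw [sigb, hrep]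
      simp [gmap]
    refine ⟨[], k, ⟨by rw [hsig]; exact hs0, ?_⟩⟩
    rintro (h | h)
    · rw [sigb_succ, hsig] at h
      exact hnext false h
    · rw [hsig] at h
      exact hnext true h
  · obtain ⟨x, hx⟩ := gmap_surj t'
    have hsig : sigb x k = s0 := by
      rw [sigb, hx, hs]
    refine ⟨x, k, ⟨by rw [hsig]; exact hs0, ?_⟩⟩
    rintro (h | h)
    · rw [sigb_succ, hsig] at h
      exact hnext false h
    · rw [hsig] at h
      exact hnext true h

/-- `y` is not an index used by the branch sets (those are `x ++ [m]`). -/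
def Unused (m : ℕ) (y : List ℕ) : Prop := ¬ ∃ x : List ℕ, y = x ++ [m]

theorem unused_nil (m : ℕ) : Unused m [] := by
  rintro ⟨x, hx⟩
  simp at hx

theorem unused_of_cons {m : ℕ} {n : ℕ} {y : List ℕ} (h : Unused m (n :: y)) : Unused m y := by
  rintro ⟨x, hx⟩
  exact h ⟨n :: x, by rw [hx]; rfl⟩

/-- The classes of the hub: all classes in branch pieces with unused index. -/
noncomputable def HubCl (m : ℕ) : Set (ClassOf Γ) := {X | ∃ y, Unused m y ∧ X ∈ S.Dcl y}

theorem Dcl_subset_HubCl {m : ℕ} {y : List ℕ} (hy : Unused m y) : S.Dcl y ⊆ S.HubCl m :=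
  fun X hX => ⟨y, hy, hX⟩

theorem bp_mem_E0 (y : List ℕ) : S.f (gmap y) ∈ S.Ek y 0 := by
  rw [← sigb_zero y]
  exact S.f_sigb_mem_Ek y 0

theorem bp_mem_Dcl (y : List ℕ) : S.f (gmap y) ∈ S.Dcl y :=
  S.Ek_subset_Dcl y 0 (S.bp_mem_E0 y)

theorem chain_Hub {m : ℕ} {y : List ℕ} (hy : Unused m y) :
    Relation.ReflTransGen (S.rel (S.HubCl m)) (S.f (gmap y)) (S.f (gmap [])) := by
  induction y with
  | nil => exact Relation.ReflTransGen.refl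
  | cons n y ih =>
    have hy' : Unused m y := unused_of_cons hy
    have hadj : S.T.Adj (S.f (gmap (n :: y))) (S.snd true (sigb y n)) := by
      rw [gmap_cons]
      exact S.snd_adj true (sigb y n)
    have h1 : Relation.ReflTransGen (S.rel (S.HubCl m)) (S.f (gmap (n :: y)))
        (S.snd true (sigb y n)) :=
      Relation.ReflTransGen.single
        ⟨S.Dcl_subset_HubCl hy (S.bp_mem_Dcl (n :: y)),
         S.Dcl_subset_HubCl hy' (S.Ek_subset_Dcl y n (S.snd_mem_Ek true y n)), hadj⟩
    have h2 : Relation.ReflTransGen (S.rel (S.HubCl m)) (S.snd true (sigb y n))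
        (S.f (sigb y n)) :=
      S.rtg_mono ((S.Ek_subset_Dcl y n).trans (S.Dcl_subset_HubCl hy'))
        (S.rtg_symm (S.chain_Ek (S.snd_mem_Ek true y n)))
    have h3 : Relation.ReflTransGen (S.rel (S.HubCl m)) (S.f (sigb y n)) (S.f (gmap y)) :=
      S.rtg_mono (S.Dcl_subset_HubCl hy') (S.chain_Dcl_down y n)
    exact ((h1.trans h2).trans h3).trans (ih hy')

theorem walk_in_Hub (m : ℕ) {x1 x2 : W} (h1 : x1 ∈ VCl (S.HubCl m))
    (h2 : x2 ∈ VCl (S.HubCl m)) :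
    ∃ q : Γ.Walk x1 x2, ∀ z ∈ q.support, z ∈ VCl (S.HubCl m) := by
  obtain ⟨X, hX, hx1⟩ := h1
  obtain ⟨Y, hY, hx2⟩ := h2
  have H1 := S.H1_of_sub (A := S.HubCl m) (fun Z hZ => by
    obtain ⟨y, hyU, hZD⟩ := hZ
    obtain ⟨k, hk⟩ := Set.mem_iUnion.1 hZD
    exact ⟨y, k, hk, (S.Ek_subset_Dcl y k).trans (S.Dcl_subset_HubCl hyU)⟩)
  obtain ⟨y1, hy1U, hX1⟩ := hX
  obtain ⟨y2, hy2U, hX2⟩ := hY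
  have r1 : Relation.ReflTransGen (S.rel (S.HubCl m)) X (S.f (gmap [])) :=
    (S.rtg_mono (S.Dcl_subset_HubCl hy1U) (S.chain_Dcl hX1)).trans (S.chain_Hub hy1U)
  have r2 : Relation.ReflTransGen (S.rel (S.HubCl m)) Y (S.f (gmap [])) :=
    (S.rtg_mono (S.Dcl_subset_HubCl hy2U) (S.chain_Dcl hX2)).trans (S.chain_Hub hy2U)
  exact S.conn_of_rtg H1 ⟨y1, hy1U, hX1⟩ (r1.trans (S.rtg_symm r2)) x1 hx1 x2 hx2

theorem adj_child (y : List ℕ) (n : ℕ) :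
    ∃ a b : W, a ∈ VCl (S.Dcl (n :: y)) ∧ b ∈ VCl (S.Dcl y) ∧ Γ.Adj a b := by
  have hadj : S.T.Adj (S.f (gmap (n :: y))) (S.snd true (sigb y n)) := by
    rw [gmap_cons]
    exact S.snd_adj true (sigb y n)
  obtain ⟨hne, a, ha, b, hb, hG⟩ := S.hle hadj
  exact ⟨a, b, ⟨S.f (gmap (n :: y)), S.bp_mem_Dcl (n :: y), ha⟩,
    ⟨S.snd true (sigb y n), S.Ek_subset_Dcl y n (S.snd_mem_Ek true y n), hb⟩, hG⟩

theorem VCl_E0_nonempty (y : List ℕ) : (VCl (S.Ek y 0) : Set W).Nonempty := by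
  obtain ⟨a, ha⟩ := class_nonempty (S.f (gmap y))
  exact ⟨a, S.f (gmap y), S.bp_mem_E0 y, ha⟩

end SubdivPkg
/-- **Lemma 5.3.** If `G` is infinitely edge-connected, `u ≠ v`, `C` is a component of
`G - u - v`, and the quotient `C̃` has a finitely separating spanning tree containing a
subdivision of the infinite binary tree, then `G[C + u + v]` has a `T_ℵ₀ * t` minor. -/
theorem TAleph0Star_minor_of_binaryTree_in_spanningTree {V : Type u} (G : SimpleGraph V)
    (hG : InfEdgeConnected G) (u v : V) (huv : u ≠ v)
    (C : Set V) (hC : IsCompOf G u v C)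
    (T : SimpleGraph (ClassOf (G.induce C)))
    (hT : IsFinSepSpanningTree (tildeGraph (G.induce C)) T)
    (hbin : IsTopMinor T binaryTree) :
    HasMinor (G.induce (C ∪ {u, v})) TAleph0Star := by
  classical
  obtain ⟨hle, htree, hcut⟩ := hT
  obtain ⟨f, hf, p, hp1, hp2, hp3⟩ := hbin
  obtain ⟨huC, hvC, hconnC, hcomp⟩ := hC
  let S : SubdivPkg (G.induce C) := ⟨T, hle, htree, hcut, f, hf, p, hp1, hp2, hp3⟩
  have hmemu : u ∈ C ∪ {u, v} := Or.inr (by simp)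
  have hmemv : v ∈ C ∪ {u, v} := Or.inr (by simp)
  let ι : ↥C → ↥(C ∪ {u, v}) := fun c => ⟨c.1, Or.inl c.2⟩
  have hadjGH : ∀ (a b : ↥C), (G.induce C).Adj a b → (G.induce (C ∪ {u, v})).Adj (ι a) (ι b) := by
    intro a b hab
    exact hab
  let ιhom : (G.induce C) →g (G.induce (C ∪ {u, v})) := ⟨ι, fun {a b} h => hadjGH a b h⟩
  -- Every nonempty set of vertices of `C` with finite edge boundary in `Γ` sends an edge
  -- to `u` or `v`.
  have fact : ∀ A : Set ↥C, A.Nonempty → (edgeBoundary (G.induce C) A).Finite →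
      ∃ a : ↥C, a ∈ A ∧ (G.Adj a.1 u ∨ G.Adj a.1 v) := by
    intro A hne hfin
    by_contra hcon
    push_neg at hcon
    obtain ⟨d, hd⟩ := hne
    have hdu : ¬ FinSep G d.1 u := hG.2 d.1 u (fun h => huC (h ▸ d.2))
    have hFfin : (Sym2.map (Subtype.val) '' (edgeBoundary (G.induce C) A)).Finite := hfin.image _
    obtain ⟨q, hq⟩ := exists_walk_avoiding hdu hFfin
    have huLA : u ∉ Subtype.val '' A := by
      rintro ⟨c, hc, hcu⟩
      exact huC (hcu ▸ c.2)
    obtain ⟨a, b, ha, hb, hadj, hmem⟩ := exists_boundary_edge (B := Subtype.val '' A) q ⟨d, hd, rfl⟩ huLA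
    obtain ⟨c, hcA, rfl⟩ := ha
    by_cases hbC : b ∈ C
    · have hbA : (⟨b, hbC⟩ : ↥C) ∉ A := fun h => hb ⟨⟨b, hbC⟩, h, rfl⟩
      refine hq _ hmem ⟨s(c, (⟨b, hbC⟩ : ↥C)), ⟨c, hcA, ⟨b, hbC⟩, hbA, hadj, rfl⟩, ?_⟩
      rw [Sym2.map_pair_eq]
    · by_cases hbu : b = u
      · exact (hcon c hcA).1 (hbu ▸ hadj)
      · by_cases hbv : b = v
        · exact (hcon c hcA).2 (hbv ▸ hadj)
        · exact hcomp b hbC hbu hbv c.1 c.2 hadj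
  -- choice of the avoided label `m`
  set Pu : Prop := ∃ c : ↥C, G.Adj u c.1 with hPudef
  set Pv : Prop := ∃ c : ↥C, G.Adj v c.1 with hPvdef
  let yOf : ↥C → List ℕ := fun c => (S.cone_total (cls (G.induce C) c)).choose
  have hyOf : ∀ c : ↥C, ∃ k, cls (G.induce C) c ∈ S.Ek (yOf c) k :=
    fun c => (S.cone_total (cls (G.induce C) c)).choose_spec
  let lastN : List ℕ → ℕ := fun y => (y.getLast?).getD 0
  set yu : List ℕ := if h : Pu then yOf h.choose else [] with hyu
  set yv : List ℕ := if h : Pv then yOf h.choose else [] with hyv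
  set m : ℕ := lastN yu + lastN yv + 1 with hm
  have hlast : ∀ (x : List ℕ), lastN (x ++ [m]) = m := by
    intro x
    show ((x ++ [m]).getLast?).getD 0 = m
    rw [List.getLast?_concat]
    rfl
  have hyu_unused : SubdivPkg.Unused m yu := by
    rintro ⟨x, hx⟩
    have h1 := hlast x
    rw [← hx] at h1
    omega
  have hyv_unused : SubdivPkg.Unused m yv := by
    rintro ⟨x, hx⟩
    have h1 := hlast x
    rw [← hx] at h1
    omega
  have hused_unused : ∀ (x : List ℕ) (y : List ℕ), SubdivPkg.Unused m y → y ≠ x ++ [m] := by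
    intro x y hy h
    exact hy ⟨x, h⟩
  -- the branch sets
  let brS : List ℕ → Set ↥C := fun x => VCl (S.Dcl (x ++ [m]))
  let hub0 : Set ↥C := VCl (S.HubCl m)
  let br : Option (List ℕ) → Set ↥(C ∪ {u, v}) := fun w =>
    match w with
    | some x => {z : ↥(C ∪ {u, v}) | ∃ hz : z.1 ∈ C, (⟨z.1, hz⟩ : ↥C) ∈ brS x}
    | none => {z : ↥(C ∪ {u, v}) | (z.1 = u ∧ Pu) ∨ (z.1 = v ∧ Pv) ∨
        ∃ hz : z.1 ∈ C, (⟨z.1, hz⟩ : ↥C) ∈ hub0}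
  have hmem_some : ∀ (x : List ℕ) (c : ↥C), c ∈ brS x → ι c ∈ br (some x) :=
    fun x c hc => ⟨c.2, hc⟩
  have hmem_hub : ∀ c : ↥C, c ∈ hub0 → ι c ∈ br none :=
    fun c hc => Or.inr (Or.inr ⟨c.2, hc⟩)
  -- the chosen neighbours of u and v lie in the hub
  have hcu_hub : ∀ (h : Pu), h.choose ∈ hub0 := by
    intro h
    obtain ⟨k, hk⟩ := hyOf h.choose
    refine ⟨cls (G.induce C) h.choose, ⟨yOf h.choose, ?_, S.Ek_subset_Dcl _ k hk⟩, mem_cls _⟩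
    have : yu = yOf h.choose := dif_pos h
    rw [← this]
    exact hyu_unused
  have hcv_hub : ∀ (h : Pv), h.choose ∈ hub0 := by
    intro h
    obtain ⟨k, hk⟩ := hyOf h.choose
    refine ⟨cls (G.induce C) h.choose, ⟨yOf h.choose, ?_, S.Ek_subset_Dcl _ k hk⟩, mem_cls _⟩
    have : yv = yOf h.choose := dif_pos h
    rw [← this]
    exact hyv_unused
  refine ⟨br, ?_, ?_, ?_, ?_⟩
  · -- nonempty
    intro w
    cases w with
    | some x =>
      obtain ⟨a, ha⟩ := class_nonempty (S.f (gmap (x ++ [m])))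
      exact ⟨ι a, a.2, ⟨S.f (gmap (x ++ [m])), S.bp_mem_Dcl (x ++ [m]), ha⟩⟩
    | none =>
      obtain ⟨a, ha⟩ := class_nonempty (S.f (gmap []))
      exact ⟨ι a, hmem_hub a ⟨S.f (gmap []), ⟨[], SubdivPkg.unused_nil m, S.bp_mem_Dcl []⟩, ha⟩⟩
  · -- connected
    intro w
    rw [SimpleGraph.connected_iff]
    constructor
    · -- preconnected
      intro z1 z2
      cases w with
      | some x =>
        obtain ⟨hz1, hm1⟩ := z1.2
        obtain ⟨hz2, hm2⟩ := z2.2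
        obtain ⟨q, hq⟩ := S.walk_in_Dcl (x ++ [m]) hm1 hm2
        have hsup : ∀ zz ∈ (q.map ιhom).support, zz ∈ br (some x) := by
          intro zz hzz
          rw [SimpleGraph.Walk.support_map, List.mem_map] at hzz
          obtain ⟨c, hc, rfl⟩ := hzz
          exact hmem_some x c (hq c hc)
        have := induce_reachable (q.map ιhom) hsup
          (hmem_some x _ hm1) (hmem_some x _ hm2)
        exact this
      | none =>
        -- connect any hub vertex to a hub0 vertex
        have key : ∀ (z : ↥(C ∪ {u, v})) (hz : z ∈ br none), ∃ (c : ↥C) (hc : c ∈ hub0),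
            ((G.induce (C ∪ {u, v})).induce (br none)).Reachable ⟨z, hz⟩ ⟨ι c, hmem_hub c hc⟩ := by
          intro z hz
          rcases hz with ⟨hzu, hP⟩ | ⟨hzv, hP⟩ | ⟨hzC, hmem⟩
          · refine ⟨hP.choose, hcu_hub hP, ?_⟩
            have hadj : (G.induce (C ∪ {u, v})).Adj z (ι hP.choose) := by
              show G.Adj z.1 hP.choose.1
              rw [hzu]
              exact hP.choose_spec
            exact (SimpleGraph.Adj.reachable (by exact hadj :
              ((G.induce (C ∪ {u, v})).induce (br none)).Adj ⟨z, Or.inl ⟨hzu, hP⟩⟩ ⟨_, hmem_hub _ (hcu_hub hP)⟩))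
          · refine ⟨hP.choose, hcv_hub hP, ?_⟩
            have hadj : (G.induce (C ∪ {u, v})).Adj z (ι hP.choose) := by
              show G.Adj z.1 hP.choose.1
              rw [hzv]
              exact hP.choose_spec
            exact (SimpleGraph.Adj.reachable (by exact hadj :
              ((G.induce (C ∪ {u, v})).induce (br none)).Adj ⟨z, Or.inr (Or.inl ⟨hzv, hP⟩)⟩
                ⟨_, hmem_hub _ (hcv_hub hP)⟩))
          · exact ⟨⟨z.1, hzC⟩, hmem, SimpleGraph.Reachable.refl _⟩
        obtain ⟨c1, hc1, hr1⟩ := key z1.1 z1.2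
        obtain ⟨c2, hc2, hr2⟩ := key z2.1 z2.2
        obtain ⟨q, hq⟩ := S.walk_in_Hub m hc1 hc2
        have hsup : ∀ zz ∈ (q.map ιhom).support, zz ∈ br none := by
          intro zz hzz
          rw [SimpleGraph.Walk.support_map, List.mem_map] at hzz
          obtain ⟨c, hc, rfl⟩ := hzz
          exact hmem_hub c (hq c hc)
        have hmid := induce_reachable (q.map ιhom) hsup
          (hmem_hub _ hc1) (hmem_hub _ hc2)
        exact (hr1.trans hmid).trans hr2.symm
    · -- nonempty
      cases w with
      | some x =>
        obtain ⟨a, ha⟩ := class_nonempty (S.f (gmap (x ++ [m])))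
        exact Set.Nonempty.to_subtype
          ⟨ι a, a.2, ⟨S.f (gmap (x ++ [m])), S.bp_mem_Dcl (x ++ [m]), ha⟩⟩
      | none =>
        obtain ⟨a, ha⟩ := class_nonempty (S.f (gmap []))
        exact Set.Nonempty.to_subtype
          ⟨ι a, hmem_hub a ⟨S.f (gmap []), ⟨[], SubdivPkg.unused_nil m, S.bp_mem_Dcl []⟩, ha⟩⟩
  · -- disjoint
    have hdisj_ss : ∀ x x' : List ℕ, x ≠ x' → ∀ z, z ∈ br (some x) → z ∈ br (some x') → False := by
      rintro x x' hxx z ⟨hz1, hm1⟩ ⟨hz2, hm2⟩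
      obtain ⟨X, hX, hzX⟩ := hm1
      obtain ⟨X', hX', hzX'⟩ := hm2
      have hXX : X = X' := classes_eq_of_mem_inter hzX hzX'
      subst hXX
      obtain ⟨k, hk⟩ := Set.mem_iUnion.1 hX
      obtain ⟨j, hj⟩ := Set.mem_iUnion.1 hX'
      refine S.Ek_disjoint ?_ hk hj
      intro h
      exact hxx (List.append_cancel_right h)
    have hdisj_hs : ∀ x : List ℕ, ∀ z, z ∈ br none → z ∈ br (some x) → False := by
      rintro x z hzh ⟨hz2, hm2⟩
      rcases hzh with ⟨hzu, _⟩ | ⟨hzv, _⟩ | ⟨hzC, hmem⟩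
      · exact huC (hzu ▸ hz2)
      · exact hvC (hzv ▸ hz2)
      · obtain ⟨X, ⟨y, hyU, hXD⟩, hzX⟩ := hmem
        obtain ⟨X', hX', hzX'⟩ := hm2
        have hXX : X = X' := classes_eq_of_mem_inter hzX hzX'
        subst hXX
        obtain ⟨k, hk⟩ := Set.mem_iUnion.1 hXD
        obtain ⟨j, hj⟩ := Set.mem_iUnion.1 hX'
        exact S.Ek_disjoint (hused_unused x y hyU) hk hj
    intro w w' hww
    rw [Set.disjoint_left]
    intro z hz hz'
    match w, w', hww with
    | some x, some x', hww => exact hdisj_ss x x' (fun h => hww (by rw [h])) z hz hz'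
    | some x, none, _ => exact hdisj_hs x z hz' hz
    | none, some x, _ => exact hdisj_hs x z hz hz'
    | none, none, hww => exact hww rfl
  · -- adjacency
    have hubadj : ∀ x : List ℕ, ∃ zh ∈ br none, ∃ zb ∈ br (some x), (G.induce (C ∪ {u, v})).Adj zh zb := by
      intro x
      obtain ⟨a, haE, hadj⟩ := fact (VCl (S.Ek (x ++ [m]) 0)) (S.VCl_E0_nonempty _)
        (S.delta_Ek_finite _ 0)
      have haD : ι a ∈ br (some x) :=
        hmem_some x a (VCl_mono (S.Ek_subset_Dcl (x ++ [m]) 0) haE)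
      rcases hadj with hadj | hadj
      · refine ⟨⟨u, hmemu⟩, Or.inl ⟨rfl, ⟨a, hadj.symm⟩⟩, ι a, haD, ?_⟩
        show G.Adj u a.1
        exact hadj.symm
      · refine ⟨⟨v, hmemv⟩, Or.inr (Or.inl ⟨rfl, ⟨a, hadj.symm⟩⟩), ι a, haD, ?_⟩
        show G.Adj v a.1
        exact hadj.symm
    have someadj : ∀ (y : List ℕ) (n : ℕ),
        ∃ z1 ∈ br (some (n :: y)), ∃ z2 ∈ br (some y), (G.induce (C ∪ {u, v})).Adj z1 z2 := by
      intro y n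
      obtain ⟨a, b, haD, hbD, hab⟩ := S.adj_child (y ++ [m]) n
      refine ⟨ι a, ⟨a.2, ?_⟩, ι b, ⟨b.2, hbD⟩, hadjGH a b hab⟩
      exact haD
    intro w w' hadj
    match w, w' with
    | none, none => exact (hadj : False).elim
    | none, some x => exact hubadj x
    | some x, none =>
      obtain ⟨zh, hzh, zb, hzb, hzz⟩ := hubadj x
      exact ⟨zb, hzb, zh, hzh, hzz.symm⟩
    | some a, some b =>
      rcases (hadj : TAleph0.Adj a b) with ⟨n, rfl⟩ | ⟨n, rfl⟩
      · exact someadj b n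
      · obtain ⟨z1, hz1, z2, hz2, hzz⟩ := someadj a n
        exact ⟨z2, hz2, z1, hz1, hzz.symm⟩
end

section
/- Suppose that G is an infinitely edge-connected graph, that u, v are two distinct vertices of G, and that C is a connected component of G − u − v. If T is a finitely separating spanning tree of the quotient graph C̃ and t ∈ T is a node of finite degree in T, then the subgraph C[t] of C induced by the ∼-class t is infinitely edge-connected, and at least one of u and v sends infinitely many edges of G to the vertex set t ⊆ V(C). -/
open SimpleGraph

universe u v

/-! ### Auxiliary lemmas for Lemma 5.7 -/

section Aux57

variable {W : Type u} {K : SimpleGraph W}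

lemma aux57_edgeSeparates_symm {F : Set (Sym2 W)} {a b : W}
    (h : EdgeSeparates K F a b) : EdgeSeparates K F b a := by
  intro p
  obtain ⟨e, he, hF⟩ := h p.reverse
  rw [SimpleGraph.Walk.edges_reverse, List.mem_reverse] at he
  exact ⟨e, he, hF⟩

lemma aux57_finSep_symm {a b : W} (h : FinSep K a b) : FinSep K b a := by
  obtain ⟨F, hF, hsep⟩ := h
  exact ⟨F, hF, aux57_edgeSeparates_symm hsep⟩

lemma aux57_not_finSep_self (K : SimpleGraph W) (a : W) : ¬ FinSep K a a := by
  rintro ⟨F, hF, hsep⟩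
  obtain ⟨e, he, -⟩ := hsep SimpleGraph.Walk.nil
  simp at he

lemma aux57_exists_walk_avoiding {a b : W} (h : ¬ FinSep K a b)
    {F : Set (Sym2 W)} (hF : F.Finite) : ∃ p : K.Walk a b, ∀ e ∈ p.edges, e ∉ F := by
  by_contra hcon
  push_neg at hcon
  exact h ⟨F, hF, fun p => hcon p⟩

lemma aux57_not_finSep_trans {a b c : W} (hab : ¬ FinSep K a b)
    (hbc : ¬ FinSep K b c) : ¬ FinSep K a c := by
  rintro ⟨F, hF, hsep⟩
  obtain ⟨p, hp⟩ := aux57_exists_walk_avoiding hab hF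
  obtain ⟨q, hq⟩ := aux57_exists_walk_avoiding hbc hF
  obtain ⟨e, he, heF⟩ := hsep (p.append q)
  rw [SimpleGraph.Walk.edges_append, List.mem_append] at he
  rcases he with he | he
  · exact hp e he heF
  · exact hq e he heF

lemma aux57_ncls_eq {x y : W} (h : ¬ FinSep K x y) : ncls K x = ncls K y := by
  ext z
  simp only [ncls, Set.mem_setOf_eq]
  constructor
  · intro hz
    exact aux57_not_finSep_trans (fun hf => h (aux57_finSep_symm hf)) hz
  · intro hz
    exact aux57_not_finSep_trans h hz

lemma aux57_not_finSep_of_mem (t : ClassOf K) {a b : W}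
    (ha : a ∈ t.1) (hb : b ∈ t.1) : ¬ FinSep K a b := by
  obtain ⟨x, hx⟩ := t.2
  rw [hx] at ha hb
  exact aux57_not_finSep_trans (fun hf => ha (aux57_finSep_symm hf)) hb

lemma aux57_finSep_of_ne_class {X Y : ClassOf K} (hXY : X ≠ Y)
    {a b : W} (ha : a ∈ X.1) (hb : b ∈ Y.1) : FinSep K a b := by
  by_contra h
  apply hXY
  obtain ⟨x, hx⟩ := X.2
  obtain ⟨y, hy⟩ := Y.2
  apply Subtype.ext
  rw [hx] at ha
  rw [hy] at hb
  rw [hx, hy]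
  have h1 : ¬ FinSep K x a := ha
  have h2 : ¬ FinSep K y b := hb
  have : ¬ FinSep K x y :=
    aux57_not_finSep_trans h1 (aux57_not_finSep_trans h (fun hf => h2 (aux57_finSep_symm hf)))
  exact aux57_ncls_eq this

lemma aux57_classEdges_finite {X Y : ClassOf K} (hXY : X ≠ Y) :
    {e : Sym2 W | ∃ a ∈ X.1, ∃ b ∈ Y.1, K.Adj a b ∧ e = s(a, b)}.Finite := by
  obtain ⟨x, hx⟩ := X.2
  obtain ⟨y, hy⟩ := Y.2
  have hxX : x ∈ X.1 := by rw [hx]; exact aux57_not_finSep_self K x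
  have hyY : y ∈ Y.1 := by rw [hy]; exact aux57_not_finSep_self K y
  obtain ⟨F, hF, hsep⟩ := aux57_finSep_of_ne_class hXY hxX hyY
  apply hF.subset
  rintro e ⟨a, ha, b, hb, hadj, rfl⟩
  obtain ⟨p, hp⟩ := aux57_exists_walk_avoiding (aux57_not_finSep_of_mem X hxX ha) hF
  obtain ⟨q, hq⟩ := aux57_exists_walk_avoiding (aux57_not_finSep_of_mem Y hb hyY) hF
  obtain ⟨e, he, heF⟩ := hsep (p.append (SimpleGraph.Walk.cons hadj q))
  rw [SimpleGraph.Walk.edges_append, List.mem_append] at he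
  rcases he with he | he
  · exact absurd heF (hp e he)
  · rw [SimpleGraph.Walk.edges_cons, List.mem_cons] at he
    rcases he with rfl | he
    · exact heF
    · exact absurd heF (hq e he)

lemma aux57_walk_crossing (A : Set W) {a b : W} (p : K.Walk a b) :
    a ∈ A →
      ((∀ z ∈ p.support, z ∈ A) ∨
        ∃ e ∈ p.edges, ∃ x ∈ A, ∃ y, y ∉ A ∧ K.Adj x y ∧ e = s(x, y)) := by
  induction p with
  | nil =>
    intro ha
    left
    intro z hz
    rw [SimpleGraph.Walk.support_nil, List.mem_singleton] at hz
    exact hz ▸ ha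
  | @cons a c b h q ih =>
    intro ha
    by_cases hc : c ∈ A
    · rcases ih hc with hall | ⟨e, he, rest⟩
      · left
        intro z hz
        rw [SimpleGraph.Walk.support_cons, List.mem_cons] at hz
        rcases hz with rfl | hz
        · exact ha
        · exact hall z hz
      · right
        exact ⟨e, by simp [he], rest⟩
    · right
      exact ⟨s(a, c), by simp, a, ha, c, hc, h, rfl⟩

lemma aux57_walk_lift (A : Set W) {a b : W} (p : K.Walk a b) :
    ∀ hsup : ∀ z ∈ p.support, z ∈ A,
      ∃ q : (K.induce A).Walk ⟨a, hsup a p.start_mem_support⟩ ⟨b, hsup b p.end_mem_support⟩,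
        p.edges = q.edges.map (Sym2.map (Subtype.val)) := by
  induction p with
  | nil =>
    intro hsup
    exact ⟨SimpleGraph.Walk.nil, by simp⟩
  | @cons a c b h q ih =>
    intro hsup
    have hsup' : ∀ z ∈ q.support, z ∈ A := fun z hz => hsup z (by simp [hz])
    obtain ⟨q', hq'⟩ := ih hsup'
    have hadj : (K.induce A).Adj ⟨a, hsup a (by simp)⟩ ⟨c, hsup' c q.start_mem_support⟩ := by
      simpa using h
    exact ⟨SimpleGraph.Walk.cons hadj q', by simp [hq']⟩

end Aux57

/-- **Lemma 5.7.** If `G` is infinitely edge-connected, `u ≠ v`, `C` is a component of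
`G - u - v`, `T` is a finitely separating spanning tree of `C̃` and `t ∈ T` has finite
degree, then `C[t]` is infinitely edge-connected and `u` or `v` sends infinitely many
edges of `G` to the part `t ⊆ V(C)`. -/
theorem part_infEdgeConnected_of_finite_degree {V : Type u} (G : SimpleGraph V)
    (hG : InfEdgeConnected G) (u v : V) (huv : u ≠ v)
    (C : Set V) (hC : IsCompOf G u v C)
    (T : SimpleGraph (ClassOf (G.induce C)))
    (hT : IsFinSepSpanningTree (tildeGraph (G.induce C)) T)
    (t : ClassOf (G.induce C)) (ht : {s | T.Adj t s}.Finite) :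
    InfEdgeConnected ((G.induce C).induce t.1) ∧
      ({x : ↥C | x ∈ t.1 ∧ G.Adj u x.1}.Infinite ∨
        {x : ↥C | x ∈ t.1 ∧ G.Adj v x.1}.Infinite) := by
  classical
  obtain ⟨x₀, hx₀cls⟩ := t.2
  have hx₀t : x₀ ∈ t.1 := by rw [hx₀cls]; exact aux57_not_finSep_self _ x₀
  -- Step 2: `t` has finitely many neighbours in the quotient graph
  have hnbr : {s | (tildeGraph (G.induce C)).Adj t s}.Finite := by
    have hbig : (⋃ t₁ ∈ {s | T.Adj t s}, FundCut (tildeGraph (G.induce C)) T t t₁).Finite :=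
      ht.biUnion (fun t₁ h₁ => hT.2.2 t t₁ h₁)
    apply Set.Finite.of_finite_image (f := fun s => s(t, s))
    · apply hbig.subset
      rintro e ⟨s, hs, rfl⟩
      have hs' : (tildeGraph (G.induce C)).Adj t s := hs
      obtain ⟨w⟩ := hT.2.1.isConnected.preconnected t s
      obtain ⟨p, hp⟩ := w.toPath
      cases p with
      | nil => exact absurd rfl hs'.ne
      | @cons _ t₁ _ h₁ q =>
        refine Set.mem_biUnion h₁ ?_
        refine ⟨hs', t, s, rfl, SimpleGraph.Reachable.refl t, ?_⟩
        have hnd : (SimpleGraph.Walk.cons h₁ q).edges.Nodup := hp.isTrail.edges_nodup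
        rw [SimpleGraph.Walk.edges_cons] at hnd
        have hq : ∀ e ∈ q.edges, e ∉ ({s(t, t₁)} : Set (Sym2 (ClassOf (G.induce C)))) := by
          intro e he hmem
          rw [Set.mem_singleton_iff] at hmem
          subst hmem
          exact (List.nodup_cons.mp hnd).1 he
        exact ⟨q.toDeleteEdges {s(t, t₁)} hq⟩
    · intro s1 h1 s2 h2 heq
      simp only [Sym2.eq_iff] at heq
      rcases heq with ⟨-, h⟩ | ⟨h', h⟩
      · exact h
      · exact h.trans h'
  -- Step 3: only finitely many edges of `C` leave the part `t`
  have hD : {e : Sym2 ↥C | ∃ a ∈ t.1, ∃ b, b ∉ t.1 ∧ (G.induce C).Adj a b ∧ e = s(a, b)}.Finite := by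
    apply Set.Finite.subset
      (hnbr.biUnion (fun s hs =>
        aux57_classEdges_finite (X := t) (Y := s)
          (show (tildeGraph (G.induce C)).Adj t s from hs).ne))
    rintro e ⟨a, ha, b, hb, hadj, rfl⟩
    have hbs : b ∈ (⟨ncls (G.induce C) b, b, rfl⟩ : ClassOf (G.induce C)).1 :=
      aux57_not_finSep_self _ b
    have hne : t ≠ (⟨ncls (G.induce C) b, b, rfl⟩ : ClassOf (G.induce C)) := by
      intro hEq
      exact hb (hEq ▸ hbs)
    exact Set.mem_biUnion (show (tildeGraph (G.induce C)).Adj t ⟨ncls (G.induce C) b, b, rfl⟩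
      from ⟨hne, a, ha, b, hbs, hadj⟩) ⟨a, ha, b, hbs, hadj, rfl⟩
  -- Step 5 (the key counting argument): `u` or `v` sends infinitely many edges to `t`
  have key : ({x : ↥C | x ∈ t.1 ∧ G.Adj u x.1}.Infinite ∨
      {x : ↥C | x ∈ t.1 ∧ G.Adj v x.1}.Infinite) := by
    by_contra hcon
    push_neg at hcon
    obtain ⟨hu, hv⟩ := hcon
    have hFfin : (((fun x : ↥C => s(u, (x : V))) '' {x : ↥C | x ∈ t.1 ∧ G.Adj u x.1}) ∪
        ((fun x : ↥C => s(v, (x : V))) '' {x : ↥C | x ∈ t.1 ∧ G.Adj v x.1}) ∪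
        (Sym2.map (Subtype.val) ''
          {e : Sym2 ↥C | ∃ a ∈ t.1, ∃ b, b ∉ t.1 ∧ (G.induce C).Adj a b ∧ e = s(a, b)})).Finite :=
      ((hu.image _).union (hv.image _)).union (hD.image _)
    have hx₀u : (x₀ : V) ≠ u := fun h => hC.1 (h ▸ x₀.2)
    apply hG.2 (x₀ : V) u hx₀u
    refine ⟨_, hFfin, ?_⟩
    have main : ∀ {a b : V} (p : G.Walk a b), b = u → ∀ ha : a ∈ C,
        (⟨a, ha⟩ : ↥C) ∈ t.1 → ∃ e ∈ p.edges,
          e ∈ (((fun x : ↥C => s(u, (x : V))) '' {x : ↥C | x ∈ t.1 ∧ G.Adj u x.1}) ∪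
            ((fun x : ↥C => s(v, (x : V))) '' {x : ↥C | x ∈ t.1 ∧ G.Adj v x.1}) ∪
            (Sym2.map (Subtype.val) ''
              {e : Sym2 ↥C | ∃ a ∈ t.1, ∃ b, b ∉ t.1 ∧ (G.induce C).Adj a b ∧ e = s(a, b)})) := by
      intro a b p
      induction p with
      | nil =>
        intro hbu ha _
        exact absurd (hbu ▸ ha) hC.1
      | @cons a c b h q ih =>
        intro hbu ha hat
        by_cases hcu : c = u
        · refine ⟨s(a, c), by simp,
            Or.inl (Or.inl ⟨⟨a, ha⟩, ⟨hat, hcu ▸ h.symm⟩, ?_⟩)⟩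
          rw [hcu]
          exact Sym2.eq_swap
        · by_cases hcv : c = v
          · refine ⟨s(a, c), by simp,
              Or.inl (Or.inr ⟨⟨a, ha⟩, ⟨hat, hcv ▸ h.symm⟩, ?_⟩)⟩
            rw [hcv]
            exact Sym2.eq_swap
          · by_cases hcC : c ∈ C
            · by_cases hct : (⟨c, hcC⟩ : ↥C) ∈ t.1
              · obtain ⟨e, he, heF⟩ := ih hbu hcC hct
                exact ⟨e, by simp [he], heF⟩
              · refine ⟨s(a, c), by simp, Or.inr ?_⟩
                exact ⟨s((⟨a, ha⟩ : ↥C), (⟨c, hcC⟩ : ↥C)),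
                  ⟨⟨a, ha⟩, hat, ⟨c, hcC⟩, hct, (by exact h), rfl⟩, by simp⟩
            · exact absurd h (hC.2.2.2 c hcC hcu hcv a ha)
    intro p
    exact main p rfl x₀.2 (by exact hx₀t)
  refine ⟨⟨?_, ?_⟩, key⟩
  · -- nontriviality of the part `t`
    have htinf : (t.1 : Set ↥C).Infinite := by
      rcases key with hk | hk
      · exact hk.mono (fun x hx => hx.1)
      · exact hk.mono (fun x hx => hx.1)
    exact Set.nontrivial_coe_sort.mpr htinf.nontrivial
  · -- infinite edge-connectivity of the part `t`
    intro x y hxy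
    rintro ⟨F, hFfin, hsep⟩
    apply aux57_not_finSep_of_mem t x.2 y.2
    refine ⟨(Sym2.map (Subtype.val) '' F) ∪
      {e : Sym2 ↥C | ∃ a ∈ t.1, ∃ b, b ∉ t.1 ∧ (G.induce C).Adj a b ∧ e = s(a, b)},
      (hFfin.image _).union hD, ?_⟩
    intro p
    rcases aux57_walk_crossing t.1 p x.2 with hall | ⟨e, he, a, haA, b0, hb0, hadj, rfl⟩
    · obtain ⟨q, hq⟩ := aux57_walk_lift t.1 p hall
      obtain ⟨e, he, heF⟩ := hsep q
      refine ⟨Sym2.map (Subtype.val) e, ?_, Or.inl ⟨e, heF, rfl⟩⟩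
      rw [hq]
      exact List.mem_map_of_mem he
    · exact ⟨s(a, b0), he, Or.inr ⟨a, haA, b0, hb0, hadj, rfl⟩⟩
end
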